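/- arXiv:math-ph/9908003 — 7 statements merged into one kernel-verified Lean document; each statement's English description precedes it below -/
import Mathlib

section
/- For all integers k ≥ 1 and 0 ≤ l, l' ≤ k, one has Σ_{i} (i+1) = (min(l, k−l') + 1)·(min(l', k−l) + 1), where the sum runs over all integers i with |l−l'| ≤ i ≤ min(2k−l−l', l+l') and i ≡ l+l' (mod 2). -/
lemma verlinde_key (a : ℤ) : ∀ n : ℤ, 0 ≤ n →
    ∑ i ∈ (Finset.Icc a (a + 2 * n)).filter (fun i => (a - i) % 2 = 0), (i + 1)
      = (n + 1) * (a + n + 1) := by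
  refine Int.le_induction ?_ ?_
  · have h : (Finset.Icc a (a + 2 * 0)).filter (fun i => (a - i) % 2 = 0) = {a} := by
      ext i
      simp only [Finset.mem_filter, Finset.mem_Icc, Finset.mem_singleton]
      omega
    rw [h]
    simp
  · intro n hn ih
    have h : (Finset.Icc a (a + 2 * (n + 1))).filter (fun i => (a - i) % 2 = 0)
        = insert (a + 2 * n + 2) ((Finset.Icc a (a + 2 * n)).filter (fun i => (a - i) % 2 = 0)) := by
      ext i
      simp only [Finset.mem_filter, Finset.mem_Icc, Finset.mem_insert]
      omega
    rw [h, Finset.sum_insert (by simp only [Finset.mem_filter, Finset.mem_Icc]; omega), ih]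
    ring

/-- Verlinde algebra of level `k` for `sl₂`: the total dimension of the constituents of
`π_l · π_{l'}` equals `(min(l, k−l') + 1) · (min(l', k−l) + 1)`. -/
theorem verlinde_dimension_sum (k l l' : ℤ) (hk : 1 ≤ k)
    (hl0 : 0 ≤ l) (hlk : l ≤ k) (hl'0 : 0 ≤ l') (hl'k : l' ≤ k) :
    ∑ i ∈ (Finset.Icc |l - l'| (min (2 * k - l - l') (l + l'))).filter
        (fun i => (l + l' - i) % 2 = 0), (i + 1)
      = (min l (k - l') + 1) * (min l' (k - l) + 1) := by
  set a := |l - l'| with ha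
  set m := min (2 * k - l - l') (l + l') with hm
  have hfc : (Finset.Icc a m).filter (fun i => (l + l' - i) % 2 = 0)
      = (Finset.Icc a m).filter (fun i => (a - i) % 2 = 0) := by
    have haval : a = l - l' ∨ a = l' - l := by
      rcases le_total l' l with h | h
      · left; rw [ha, abs_of_nonneg (by omega)]
      · right; rw [ha, abs_of_nonpos (by omega)]; ring
    apply Finset.filter_congr
    intro i _
    constructor <;> intro h <;> rcases haval with h' | h' <;> omega
  rw [hfc]
  rcases le_total l' l with hll | hll <;> rcases le_total (l + l') k with hs | hs
  · have ha' : a = l - l' := by rw [ha, abs_of_nonneg (by omega)]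
    have hm' : m = l + l' := by rw [hm, min_eq_right (by omega)]
    rw [min_eq_left (by omega), min_eq_left (by omega), ha', hm',
      show l + l' = (l - l') + 2 * l' by ring, verlinde_key _ l' hl'0]
    ring
  · have ha' : a = l - l' := by rw [ha, abs_of_nonneg (by omega)]
    have hm' : m = 2 * k - l - l' := by rw [hm, min_eq_left (by omega)]
    rw [min_eq_right (by omega), min_eq_right (by omega), ha', hm',
      show 2 * k - l - l' = (l - l') + 2 * (k - l) by ring,
      verlinde_key _ (k - l) (by omega)]
    ring
  · have ha' : a = l' - l := by rw [ha, abs_of_nonpos (by omega), neg_sub]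
    have hm' : m = l + l' := by rw [hm, min_eq_right (by omega)]
    rw [min_eq_left (by omega), min_eq_left (by omega), ha', hm',
      show l + l' = (l' - l) + 2 * l by ring, verlinde_key _ l hl0]
    ring
  · have ha' : a = l' - l := by rw [ha, abs_of_nonpos (by omega), neg_sub]
    have hm' : m = 2 * k - l - l' := by rw [hm, min_eq_left (by omega)]
    rw [min_eq_right (by omega), min_eq_right (by omega), ha', hm',
      show 2 * k - l - l' = (l' - l) + 2 * (k - l') by ring,
      verlinde_key _ (k - l') (by omega)]
    ring
end

section
/- Let K be a field, n ≥ 1, A an n×n matrix over K, and φ, v ∈ K^n. Suppose α_0, α_1, …, α_s are distinct indices such that φ_{α_i} = φ_{α_0} for all 0 ≤ i ≤ s and such that the columns of A indexed by α_0, …, α_s all coincide (i.e. A_{β,α_i} = A_{β,α_0} for every row index β and every i). Let φ̃ and ṽ be obtained from φ and v by deleting the entries with indices α_1, …, α_s, and additionally replacing the entry of v at α_0 by Σ_{i=0}^{s} v_{α_i}; let Ã be the (n−s)×(n−s) matrix obtained from A by deleting the rows and columns with indices α_1, …, α_s and replacing the row at α_0 by the sum of the rows of A at α_0, α_1, …,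 α_s (restricted to the surviving columns). Then for every integer m ≥ 0, Σ_{β,γ} φ_β (A^m)_{β,γ} v_γ = Σ_{β,γ} φ̃_β (Ã^m)_{β,γ} ṽ_γ. -/
/-- Matrix-reduction lemma: indices on which `φ` agrees and whose columns of `A` agree can be
merged into a single index (summing the corresponding entries of `v` and the corresponding rows
of `A`) without changing `φᵀ A^m v` for any power `m`.  Here `S` is the set of surviving
indices (`α 0` survives, `α i` for `i ≠ 0` are deleted), `B` is the reduced matrix, `w` the
reduced vector and `ψ` the reduced functional. -/
theorem matrix_reduction
    {K : Type*} [Field K] {n s : ℕ} (hn : 1 ≤ n)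
    (A : Matrix (Fin n) (Fin n) K) (φ v : Fin n → K)
    (α : Fin (s + 1) → Fin n) (hα : Function.Injective α)
    (hφ : ∀ i, φ (α i) = φ (α 0))
    (hA : ∀ (β : Fin n) (i : Fin (s + 1)), A β (α i) = A β (α 0))
    (S : Finset (Fin n))
    (hS : S = Finset.univ.filter (fun β => ∀ i : Fin (s + 1), i ≠ 0 → β ≠ α i))
    (B : Matrix S S K)
    (hB : ∀ β γ : S, B β γ =
      if (β : Fin n) = α 0 then ∑ i : Fin (s + 1), A (α i) (γ : Fin n)
      else A (β : Fin n) (γ : Fin n))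
    (w : S → K)
    (hw : ∀ γ : S, w γ =
      if (γ : Fin n) = α 0 then ∑ i : Fin (s + 1), v (α i) else v (γ : Fin n))
    (ψ : S → K) (hψ : ∀ β : S, ψ β = φ (β : Fin n))
    (m : ℕ) :
    ∑ β : Fin n, ∑ γ : Fin n, φ β * (A ^ m) β γ * v γ
      = ∑ β : S, ∑ γ : S, ψ β * (B ^ m) β γ * w γ := by
  classical
  have hmemS : ∀ β : Fin n, β ∈ S ↔ ∀ i : Fin (s+1), i ≠ 0 → β ≠ α i := by
    simp [hS]
  have hα0S : α 0 ∈ S := (hmemS _).2 (fun i hi h => hi (hα h).symm)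
  set E : Finset (Fin (s+1)) := Finset.univ.erase 0 with hE
  have hsplit : ∀ h : Fin n → K,
      ∑ δ : Fin n, h δ = (∑ δ ∈ S, h δ) + ∑ i ∈ E, h (α i) := by
    intro h
    have himg : Finset.univ.filter (fun β : Fin n => ¬ ∀ i : Fin (s+1), i ≠ 0 → β ≠ α i)
        = E.image α := by
      ext β
      simp only [Finset.mem_filter, Finset.mem_univ, true_and, Finset.mem_image, hE,
        Finset.mem_erase]
      push_neg
      constructor
      · rintro ⟨i, hi, rfl⟩; exact ⟨i, ⟨hi, trivial⟩, rfl⟩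
      · rintro ⟨i, ⟨hi, -⟩, rfl⟩; exact ⟨i, hi, rfl⟩
    have hpart := Finset.sum_filter_add_sum_filter_not Finset.univ
      (fun β : Fin n => ∀ i : Fin (s+1), i ≠ 0 → β ≠ α i) h
    rw [← hpart, himg, Finset.sum_image (fun x _ y _ hxy => hα hxy), ← hS]
  set f : ℕ → Fin n → K := fun k γ => ∑ β : Fin n, φ β * (A ^ k) β γ with hf
  have hrecA : ∀ (k : ℕ) (γ : Fin n), f (k+1) γ = ∑ δ : Fin n, f k δ * A δ γ := by
    intro k γ
    simp only [hf, pow_succ, Matrix.mul_apply, Finset.mul_sum, Finset.sum_mul, mul_assoc]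
    exact Finset.sum_comm
  have main : ∀ k : ℕ, (∀ i, f k (α i) = f k (α 0)) ∧
      ∀ γ : S, (∑ β : S, ψ β * (B ^ k) β γ) = f k (γ : Fin n) := by
    intro k
    induction k with
    | zero =>
      constructor
      · intro i
        simp only [hf, pow_zero, Matrix.one_apply, mul_ite, mul_one, mul_zero,
          Finset.sum_ite_eq', Finset.mem_univ, if_true]
        exact hφ i
      · intro γ
        simp only [hf, pow_zero, Matrix.one_apply, mul_ite, mul_one, mul_zero,
          Finset.sum_ite_eq', Finset.mem_univ, if_true]
        exact hψ γ
    | succ k ih =>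
      have hstep : ∀ i, f (k+1) (α i) = f (k+1) (α 0) := by
        intro i
        rw [hrecA, hrecA]
        exact Finset.sum_congr rfl fun δ _ => by rw [hA δ i]
      refine ⟨hstep, fun γ => ?_⟩
      have hrecB : (∑ β : S, ψ β * (B ^ (k+1)) β γ)
          = ∑ δ : S, (∑ β : S, ψ β * (B ^ k) β δ) * B δ γ := by
        simp only [pow_succ, Matrix.mul_apply, Finset.mul_sum, Finset.sum_mul, mul_assoc]
        exact Finset.sum_comm
      rw [hrecB]
      have h1 : (∑ δ : S, (∑ β : S, ψ β * (B ^ k) β δ) * B δ γ)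
          = ∑ δ ∈ S, f k δ * (if δ = α 0 then ∑ i : Fin (s+1), A (α i) (γ : Fin n)
              else A δ (γ : Fin n)) := by
        rw [← Finset.sum_coe_sort S
          (fun δ : Fin n => f k δ * (if δ = α 0 then ∑ i : Fin (s+1), A (α i) (γ : Fin n)
              else A δ (γ : Fin n)))]
        exact Finset.sum_congr rfl fun δ _ => by rw [ih.2 δ, hB δ γ]
      rw [h1, hrecA, hsplit (fun δ => f k δ * A δ (γ : Fin n))]
      rw [← Finset.add_sum_erase S _ hα0S, ← Finset.add_sum_erase S _ hα0S]
      have h2 : ∑ δ ∈ S.erase (α 0), f k δ * (if δ = α 0 then ∑ i : Fin (s+1), A (α i) (γ : Fin n) else A δ (γ : Fin n))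
          = ∑ δ ∈ S.erase (α 0), f k δ * A δ (γ : Fin n) := by
        refine Finset.sum_congr rfl fun δ hδ => ?_
        rw [if_neg (Finset.mem_erase.1 hδ).1]
      rw [h2, if_pos rfl]
      have h3 : ∑ i ∈ E, f k (α i) * A (α i) (γ : Fin n)
          = f k (α 0) * ∑ i ∈ E, A (α i) (γ : Fin n) := by
        rw [Finset.mul_sum]
        exact Finset.sum_congr rfl fun i _ => by rw [ih.1 i]
      have h4 : (∑ i : Fin (s+1), A (α i) (γ : Fin n))
          = A (α 0) (γ : Fin n) + ∑ i ∈ E, A (α i) (γ : Fin n) :=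
        (Finset.add_sum_erase Finset.univ _ (Finset.mem_univ 0)).symm
      rw [h3, h4]
      ring
  have hL : ∑ β : Fin n, ∑ γ : Fin n, φ β * (A ^ m) β γ * v γ
      = ∑ γ : Fin n, f m γ * v γ := by
    rw [Finset.sum_comm]
    simp only [hf, Finset.sum_mul]
  have hR : ∑ β : S, ∑ γ : S, ψ β * (B ^ m) β γ * w γ
      = ∑ γ : S, (∑ β : S, ψ β * (B ^ m) β γ) * w γ := by
    rw [Finset.sum_comm]
    simp only [Finset.sum_mul]
  rw [hL, hR]
  have h5 : ∑ γ : S, (∑ β : S, ψ β * (B ^ m) β γ) * w γ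
      = ∑ γ ∈ S, f m γ * (if γ = α 0 then ∑ i : Fin (s+1), v (α i) else v γ) := by
    rw [← Finset.sum_coe_sort S (fun γ : Fin n => f m γ * (if γ = α 0 then ∑ i : Fin (s+1), v (α i) else v γ))]
    exact Finset.sum_congr rfl fun γ _ => by rw [(main m).2 γ, hw γ]
  rw [h5, hsplit (fun γ => f m γ * v γ)]
  rw [← Finset.add_sum_erase S _ hα0S, ← Finset.add_sum_erase S _ hα0S]
  have h2 : ∑ γ ∈ S.erase (α 0), f m γ * (if γ = α 0 then ∑ i : Fin (s+1), v (α i) else v γ)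
      = ∑ γ ∈ S.erase (α 0), f m γ * v γ :=
    Finset.sum_congr rfl fun γ hγ => by rw [if_neg (Finset.mem_erase.1 hγ).1]
  have h3 : ∑ i ∈ E, f m (α i) * v (α i) = f m (α 0) * ∑ i ∈ E, v (α i) := by
    rw [Finset.mul_sum]
    exact Finset.sum_congr rfl fun i _ => by rw [(main m).1 i]
  have h4 : (∑ i : Fin (s+1), v (α i)) = v (α 0) + ∑ i ∈ E, v (α i) :=
    (Finset.add_sum_erase Finset.univ _ (Finset.mem_univ 0)).symm
  rw [h2, h3, h4, if_pos rfl]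
  ring
end

section
/- Fix integers k ≥ 1, 0 ≤ l ≤ k, and N ≥ 1. Let p(k,l,N) be the number of tuples of nonnegative integers (a_0, a_1, …, a_{N−1}; b_1, …, b_{N−1}; c_1, …, c_{N−1}) (with the conventions a_i = b_i = c_i = 0 for i ≥ N and b_0 = c_0 = 0) satisfying: (i) a_i + a_{i+1} + b_{i+1} ≤ k for all i ≥ 0; (ii) a_i + b_{i+1} + c_{i+1} ≤ k for all i ≥ 0; (iii) a_i + b_i + c_{i+1} ≤ k for all i ≥ 1; (iv) b_i + c_i + c_{i+1} ≤ k for all i ≥ 1; (v) a_0 ≤ l and c_1 ≤ k − l. Define integers d^{(N)}_{k,l} by d^{(1)}_{k,l} = l + 1 and d^{(N+1)}_{k,l} = Σ_{l'=0}^{k} (min(l, k−l') + 1)·(min(l', k−l) + 1)·d^{(N)}_{k,l'}. Then p(k,l,N) = d^{(N)}_{k,l}. -/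
open Finset

namespace EhfAux

abbrev X : Type := (ℕ → ℕ) × (ℕ → ℕ) × (ℕ → ℕ)

/-- support condition -/
def Sup (N : ℕ) (t : X) : Prop :=
  (∀ i, N ≤ i → t.1 i = 0) ∧ (∀ i, N ≤ i → t.2.1 i = 0) ∧ (∀ i, N ≤ i → t.2.2 i = 0)

/-- internal constraints -/
def Ok (k : ℕ) (t : X) : Prop :=
  t.2.1 0 = 0 ∧ t.2.2 0 = 0 ∧
  (∀ i, t.1 i + t.1 (i + 1) + t.2.1 (i + 1) ≤ k) ∧
  (∀ i, t.1 i + t.2.1 (i + 1) + t.2.2 (i + 1) ≤ k) ∧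
  (∀ i, 1 ≤ i → t.1 i + t.2.1 i + t.2.2 (i + 1) ≤ k) ∧
  (∀ i, 1 ≤ i → t.2.1 i + t.2.2 i + t.2.2 (i + 1) ≤ k)

def Pred (k N α γ : ℕ) (t : X) : Prop := Sup N t ∧ Ok k t ∧ t.1 0 ≤ α ∧ t.2.2 1 ≤ γ

def Qred (k N a c : ℕ) (t : X) : Prop := Sup N t ∧ Ok k t ∧ t.1 0 = a ∧ t.2.2 1 = c

/-- the triple Finset for the peeling step -/
def tripleSet (k l a c : ℕ) : Finset (ℕ × ℕ × ℕ) :=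
  ((range (l + 1)) ×ˢ (range (k + 1)) ×ˢ (range (k - l + 1))).filter
    (fun x => x.1 + a + x.2.1 ≤ k ∧ x.1 + x.2.1 + x.2.2 ≤ k ∧
      a + x.2.1 + c ≤ k ∧ x.2.1 + x.2.2 + c ≤ k)

lemma ok_bounds {k : ℕ} {t : X} (h : Ok k t) :
    (∀ i, t.1 i ≤ k) ∧ (∀ i, t.2.1 i ≤ k) ∧ (∀ i, t.2.2 i ≤ k) := by
  obtain ⟨hb0, hc0, h1, h2, _h3, h4⟩ := h
  refine ⟨fun i => by have := h1 i; omega, fun i => ?_, fun i => ?_⟩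
  · cases i with
    | zero => omega
    | succ j => have := h1 j; omega
  · cases i with
    | zero => omega
    | succ j => have := h2 j; omega

lemma finite_aux (k N : ℕ) (p : X → Prop) (h : ∀ t, p t → Sup N t ∧ Ok k t) :
    Finite {t : X // p t} := by
  have hinj : Function.Injective
      (fun (s : {t : X // p t}) =>
        ((fun i : Fin N => (⟨min (s.1.1 i) k, by omega⟩ : Fin (k+1))),
         (fun i : Fin N => (⟨min (s.1.2.1 i) k, by omega⟩ : Fin (k+1))),
         (fun i : Fin N => (⟨min (s.1.2.2 i) k, by omega⟩ : Fin (k+1))))) := by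
    rintro ⟨t, ht⟩ ⟨u, hu⟩ heq
    obtain ⟨hts, htk⟩ := h t ht
    obtain ⟨hus, huk⟩ := h u hu
    have hbt := ok_bounds htk
    have hbu := ok_bounds huk
    simp only [Prod.mk.injEq] at heq
    obtain ⟨e1, e2, e3⟩ := heq
    apply Subtype.ext
    have key : ∀ (f g : ℕ → ℕ), (∀ i, N ≤ i → f i = 0) → (∀ i, N ≤ i → g i = 0) →
        (∀ i, f i ≤ k) → (∀ i, g i ≤ k) →
        ((fun i : Fin N => (⟨min (f i) k, by omega⟩ : Fin (k+1))) =
         (fun i : Fin N => (⟨min (g i) k, by omega⟩ : Fin (k+1)))) → f = g := by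
      intro f g hf hg hfk hgk he
      funext i
      by_cases hi : i < N
      · have := congrFun he ⟨i, hi⟩
        simp only [Fin.mk.injEq] at this
        have h1 := hfk i; have h2 := hgk i
        omega
      · rw [hf i (by omega), hg i (by omega)]
    have ha := key t.1 u.1 hts.1 hus.1 hbt.1 hbu.1 e1
    have hb := key t.2.1 u.2.1 hts.2.1 hus.2.1 hbt.2.1 hbu.2.1 e2
    have hc := key t.2.2 u.2.2 hts.2.2 hus.2.2 hbt.2.2 hbu.2.2 e3
    exact Prod.ext ha (Prod.ext hb hc)
  exact Finite.of_injective _ hinj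

instance finP (k N α γ : ℕ) : Finite {t : X // Pred k N α γ t} :=
  finite_aux k N _ (fun t ht => ⟨ht.1, ht.2.1⟩)

instance finQ (k N a c : ℕ) : Finite {t : X // Qred k N a c t} :=
  finite_aux k N _ (fun t ht => ⟨ht.1, ht.2.1⟩)

/-- helper sum -/
lemma sum_ind (L M : ℕ) :
    (∑ x ∈ range (L + 1), if x ≤ M then 1 else 0) = min L M + 1 := by
  induction L with
  | zero => rw [Finset.sum_range_one]; simp
  | succ n ih => rw [Finset.sum_range_succ, ih]; split <;> omega

/-- Step 4: empty fibers -/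
lemma q_zero (k N a c : ℕ) (h : k < a + c) : Nat.card {t : X // Qred k N a c t} = 0 := by
  have : IsEmpty {t : X // Qred k N a c t} := by
    refine ⟨fun s => ?_⟩
    obtain ⟨t, _, ⟨_, _, _, h2, _, _⟩, ha, hc⟩ := s
    have h := h2 0
    simp only [Nat.zero_add] at h
    omega
  exact Nat.card_of_isEmpty

/-- Step 2: partition of P by boundary values -/
lemma card_P (k N α γ : ℕ) :
    Nat.card {t : X // Pred k N α γ t} =
      ∑ a ∈ range (α + 1), ∑ c ∈ range (γ + 1), Nat.card {t : X // Qred k N a c t} := by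
  classical
  haveI : Fintype {t : X // Pred k N α γ t} := Fintype.ofFinite _
  rw [Nat.card_eq_fintype_card, ← Finset.card_univ,
    Finset.card_eq_sum_card_fiberwise
      (f := fun (s : {t : X // Pred k N α γ t}) => (s.1.1 0, s.1.2.2 1))
      (t := range (α + 1) ×ˢ range (γ + 1))
      (fun s _ => by
        simp only [Finset.mem_product, mem_range]
        exact Finset.mem_product.2 ⟨mem_range.2 (by have := s.2.2.2.1; omega),
          mem_range.2 (by have := s.2.2.2.2; omega)⟩),
    Finset.sum_product]
  refine Finset.sum_congr rfl (fun a ha => Finset.sum_congr rfl (fun c hc => ?_))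
  simp only [mem_range] at ha hc
  rw [← Fintype.card_subtype, ← Nat.card_eq_fintype_card]
  refine Nat.card_congr (Equiv.trans
    (Equiv.subtypeSubtypeEquivSubtypeInter (Pred k N α γ)
      (fun t => (t.1 0, t.2.2 1) = (a, c)))
    (Equiv.subtypeEquivRight (fun t => ?_)))
  constructor
  · rintro ⟨⟨hs, ho, _, _⟩, he⟩
    rw [Prod.mk.injEq] at he
    exact ⟨hs, ho, he.1, he.2⟩
  · rintro ⟨hs, ho, h1, h2⟩
    exact ⟨⟨hs, ho, by omega, by omega⟩, by rw [h1, h2]⟩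

lemma mem_tripleSet {k l a c : ℕ} {x : ℕ × ℕ × ℕ} :
    x ∈ tripleSet k l a c ↔ x.1 ≤ l ∧ x.2.1 ≤ k ∧ x.2.2 ≤ k - l ∧
      x.1 + a + x.2.1 ≤ k ∧ x.1 + x.2.1 + x.2.2 ≤ k ∧
      a + x.2.1 + c ≤ k ∧ x.2.1 + x.2.2 + c ≤ k := by
  simp only [tripleSet, mem_filter, mem_product, mem_range]
  omega

def shiftT (t : X) : X :=
  (fun i => t.1 (i + 1),
   fun i => match i with | 0 => 0 | j + 1 => t.2.1 (j + 2),
   fun i => match i with | 0 => 0 | j + 1 => t.2.2 (j + 2))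

def unshiftT (x y z : ℕ) (t : X) : X :=
  (fun i => match i with | 0 => x | j + 1 => t.1 j,
   fun i => match i with | 0 => 0 | 1 => y | j + 2 => t.2.1 (j + 1),
   fun i => match i with | 0 => 0 | 1 => z | j + 2 => t.2.2 (j + 1))

def peelEquiv (k l N a c : ℕ) (hN : 1 ≤ N) (hl : l ≤ k) :
    {t : X // Pred k (N + 1) l (k - l) t ∧ (t.1 1, t.2.2 2) = (a, c)} ≃
      ({x : ℕ × ℕ × ℕ // x ∈ tripleSet k l a c} × {t : X // Qred k N a c t}) where
  toFun s :=
    (⟨(s.1.1 0, s.1.2.1 1, s.1.2.2 1), by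
      obtain ⟨t, ⟨⟨hsa, hsb, hsc⟩, ⟨hb0, hc0, h3, h4, h5, h6⟩, hal, hcl⟩, hpair⟩ := s
      rw [Prod.mk.injEq] at hpair
      obtain ⟨ha, hc⟩ := hpair
      rw [mem_tripleSet]
      dsimp only
      have e1 := h3 0; have e2 := h4 0; have e3 := h5 1 le_rfl; have e4 := h6 1 le_rfl
      norm_num at e1 e2 e3 e4
      refine ⟨hal, by omega, hcl, by omega, by omega, by omega, by omega⟩⟩,
    ⟨shiftT s.1, by
      obtain ⟨t, ⟨⟨hsa, hsb, hsc⟩, ⟨hb0, hc0, h3, h4, h5, h6⟩, hal, hcl⟩, hpair⟩ := s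
      rw [Prod.mk.injEq] at hpair
      obtain ⟨ha, hc⟩ := hpair
      refine ⟨⟨fun i hi => hsa (i + 1) (by omega), fun i hi => ?_, fun i hi => ?_⟩,
        ⟨rfl, rfl, fun i => h3 (i + 1), fun i => h4 (i + 1), fun i hi => ?_, fun i hi => ?_⟩,
        ha, hc⟩
      · cases i with
        | zero => rfl
        | succ j => exact hsb (j + 2) (by omega)
      · cases i with
        | zero => rfl
        | succ j => exact hsc (j + 2) (by omega)
      · cases i with
        | zero => omega
        | succ j => exact h5 (j + 2) (by omega)
      · cases i with
        | zero => omega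
        | succ j => exact h6 (j + 2) (by omega)⟩)
  invFun p :=
    ⟨unshiftT p.1.1.1 p.1.1.2.1 p.1.1.2.2 p.2.1, by
      obtain ⟨⟨⟨x, y, z⟩, hmem⟩, ⟨t, ⟨hsa, hsb, hsc⟩, ⟨hb0, hc0, h3, h4, h5, h6⟩, ha, hc⟩⟩ := p
      rw [mem_tripleSet] at hmem
      dsimp only at hmem ⊢
      obtain ⟨m1, m2, m3, m4, m5, m6, m7⟩ := hmem
      refine ⟨⟨⟨fun i hi => ?_, fun i hi => ?_, fun i hi => ?_⟩,
        ⟨rfl, rfl, fun i => ?_, fun i => ?_, fun i hi => ?_, fun i hi => ?_⟩,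
        m1, m3⟩, ?_⟩
      · cases i with
        | zero => omega
        | succ j => exact hsa j (by omega)
      · match i, hi with
        | 0, _ => rfl
        | 1, hi => omega
        | (j + 2), hi => exact hsb (j + 1) (by omega)
      · match i, hi with
        | 0, _ => rfl
        | 1, hi => omega
        | (j + 2), hi => exact hsc (j + 1) (by omega)
      · cases i with
        | zero => show x + t.1 0 + y ≤ k; omega
        | succ j => exact h3 j
      · cases i with
        | zero => show x + y + z ≤ k; omega
        | succ j => exact h4 j
      · match i, hi with
        | 1, _ => show t.1 0 + y + t.2.2 1 ≤ k; omega
        | (j + 2), _ => exact h5 (j + 1) (by omega)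
      · match i, hi with
        | 1, _ => show y + z + t.2.2 1 ≤ k; omega
        | (j + 2), _ => exact h6 (j + 1) (by omega)
      · show (t.1 0, t.2.2 1) = (a, c)
        rw [ha, hc]⟩
  left_inv s := by
    apply Subtype.ext
    obtain ⟨t, ⟨⟨hsa, hsb, hsc⟩, ⟨hb0, hc0, h3, h4, h5, h6⟩, hal, hcl⟩, hpair⟩ := s
    show unshiftT (t.1 0) (t.2.1 1) (t.2.2 1) (shiftT t) = t
    refine Prod.ext (funext fun i => ?_) (Prod.ext (funext fun i => ?_) (funext fun i => ?_))
    · match i with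
      | 0 => rfl
      | (j + 1) => rfl
    · match i with
      | 0 => exact hb0.symm
      | 1 => rfl
      | (j + 2) => rfl
    · match i with
      | 0 => exact hc0.symm
      | 1 => rfl
      | (j + 2) => rfl
  right_inv p := by
    obtain ⟨⟨⟨x, y, z⟩, hmem⟩, ⟨t, ⟨hsa, hsb, hsc⟩, ⟨hb0, hc0, h3, h4, h5, h6⟩, ha, hc⟩⟩ := p
    refine Prod.ext (Subtype.ext ?_) (Subtype.ext ?_)
    · show ((unshiftT x y z t).1 0, (unshiftT x y z t).2.1 1, (unshiftT x y z t).2.2 1) = (x, y, z)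
      rfl
    · show shiftT (unshiftT x y z t) = t
      refine Prod.ext (funext fun i => rfl)
        (Prod.ext (funext fun i => ?_) (funext fun i => ?_))
      · match i with
        | 0 => exact hb0.symm
        | (j + 1) => rfl
      · match i with
        | 0 => exact hc0.symm
        | (j + 1) => rfl

/-- Step 1: peeling -/
lemma card_peel (k l N : ℕ) (hN : 1 ≤ N) (hl : l ≤ k) :
    Nat.card {t : X // Pred k (N + 1) l (k - l) t} =
      ∑ a ∈ range (k + 1), ∑ c ∈ range (k + 1),
        (tripleSet k l a c).card * Nat.card {t : X // Qred k N a c t} := by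
  classical
  haveI : Fintype {t : X // Pred k (N + 1) l (k - l) t} := Fintype.ofFinite _
  rw [Nat.card_eq_fintype_card, ← Finset.card_univ,
    Finset.card_eq_sum_card_fiberwise
      (f := fun (s : {t : X // Pred k (N + 1) l (k - l) t}) => (s.1.1 1, s.1.2.2 2))
      (t := range (k + 1) ×ˢ range (k + 1))
      (fun s _ => by
        have hb := ok_bounds s.2.2.1
        simp only [Finset.mem_product, mem_range]
        exact Finset.mem_product.2 ⟨mem_range.2 (by have := hb.1 1; omega),
          mem_range.2 (by have := hb.2.2 2; omega)⟩),
    Finset.sum_product]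
  refine Finset.sum_congr rfl (fun a ha => Finset.sum_congr rfl (fun c hc => ?_))
  rw [← Fintype.card_subtype, ← Nat.card_eq_fintype_card,
    ← Nat.card_eq_finsetCard, ← Nat.card_prod]
  exact Nat.card_congr (Equiv.trans
    (Equiv.subtypeSubtypeEquivSubtypeInter (Pred k (N + 1) l (k - l))
      (fun t => (t.1 1, t.2.2 2) = (a, c)))
    (peelEquiv k l N a c hN hl))

/-- Step 3: the numeric identity -/
lemma triple_card (k l a c : ℕ) (hl : l ≤ k) (hac : a + c ≤ k) :
    (tripleSet k l a c).card =
      ∑ l' ∈ range (k + 1),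
        (min l (k - l') + 1) * (min l' (k - l) + 1) * (if a ≤ l' ∧ c + l' ≤ k then 1 else 0) := by
  have hA : (tripleSet k l a c).card =
      ∑ z ∈ range (k - l + 1), ∑ m ∈ range (k + 1),
        (if c ≤ m ∧ a + m ≤ k ∧ m + z ≤ k then min l m + 1 else 0) := by
    rw [tripleSet, Finset.card_filter, Finset.sum_product]
    simp_rw [Finset.sum_product]
    calc ∑ x ∈ range (l + 1), ∑ y ∈ range (k + 1), ∑ z ∈ range (k - l + 1),
          (if x + a + y ≤ k ∧ x + y + z ≤ k ∧ a + y + c ≤ k ∧ y + z + c ≤ k then 1 else 0)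
        = ∑ x ∈ range (l + 1), ∑ z ∈ range (k - l + 1), ∑ y ∈ range (k + 1),
          (if x + a + y ≤ k ∧ x + y + z ≤ k ∧ a + y + c ≤ k ∧ y + z + c ≤ k then 1 else 0) :=
          Finset.sum_congr rfl (fun x _ => Finset.sum_comm)
      _ = ∑ z ∈ range (k - l + 1), ∑ x ∈ range (l + 1), ∑ y ∈ range (k + 1),
          (if x + a + y ≤ k ∧ x + y + z ≤ k ∧ a + y + c ≤ k ∧ y + z + c ≤ k then 1 else 0) :=
          Finset.sum_comm
      _ = ∑ z ∈ range (k - l + 1), ∑ y ∈ range (k + 1), ∑ x ∈ range (l + 1),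
          (if x + a + y ≤ k ∧ x + y + z ≤ k ∧ a + y + c ≤ k ∧ y + z + c ≤ k then 1 else 0) :=
          Finset.sum_congr rfl (fun z _ => Finset.sum_comm)
      _ = ∑ z ∈ range (k - l + 1), ∑ y ∈ range (k + 1),
          (if a + y + c ≤ k ∧ y + z + c ≤ k then
            min l (min (k - a - y) (k - y - z)) + 1 else 0) := by
          refine Finset.sum_congr rfl (fun z _ => Finset.sum_congr rfl (fun y _ => ?_))
          by_cases h : a + y + c ≤ k ∧ y + z + c ≤ k
          · rw [if_pos h]
            calc ∑ x ∈ range (l + 1),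
                  (if x + a + y ≤ k ∧ x + y + z ≤ k ∧ a + y + c ≤ k ∧ y + z + c ≤ k
                    then 1 else 0)
                = ∑ x ∈ range (l + 1),
                    (if x ≤ min (k - a - y) (k - y - z) then 1 else 0) :=
                  Finset.sum_congr rfl (fun x _ => if_congr (by omega) rfl rfl)
              _ = min l (min (k - a - y) (k - y - z)) + 1 := sum_ind l _
          · rw [if_neg h]
            exact Finset.sum_eq_zero (fun x _ => if_neg (by tauto))
      _ = ∑ z ∈ range (k - l + 1), ∑ m ∈ range (k + 1),
          (if c ≤ m ∧ a + m ≤ k ∧ m + z ≤ k then min l m + 1 else 0) := by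
          refine Finset.sum_congr rfl (fun z hz => ?_)
          simp only [mem_range] at hz
          rw [← Finset.sum_filter, ← Finset.sum_filter]
          refine Finset.sum_nbij' (fun y => min (k - a) (k - z) - y)
            (fun m => min (k - a) (k - z) - m) ?_ ?_ ?_ ?_ ?_
          · intro y hy
            simp only [mem_filter, mem_range] at hy ⊢
            omega
          · intro m hm
            simp only [mem_filter, mem_range] at hm ⊢
            omega
          · intro y hy
            simp only [mem_filter, mem_range] at hy
            omega
          · intro m hm
            simp only [mem_filter, mem_range] at hm
            omega
          · intro y hy
            simp only [mem_filter, mem_range] at hy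
            have : min (k - a - y) (k - y - z) = min (k - a) (k - z) - y := by omega
            rw [this]
  have hB : ∑ l' ∈ range (k + 1),
        (min l (k - l') + 1) * (min l' (k - l) + 1) * (if a ≤ l' ∧ c + l' ≤ k then 1 else 0) =
      ∑ z ∈ range (k - l + 1), ∑ m ∈ range (k + 1),
        (if c ≤ m ∧ a + m ≤ k ∧ m + z ≤ k then min l m + 1 else 0) := by
    calc ∑ l' ∈ range (k + 1),
          (min l (k - l') + 1) * (min l' (k - l) + 1) * (if a ≤ l' ∧ c + l' ≤ k then 1 else 0)
        = ∑ m ∈ range (k + 1),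
          (min l m + 1) * (min (k - m) (k - l) + 1) * (if c ≤ m ∧ a + m ≤ k then 1 else 0) := by
          refine Finset.sum_nbij' (fun x => k - x) (fun x => k - x) ?_ ?_ ?_ ?_ ?_
          · intro y hy; simp only [mem_range] at hy ⊢; omega
          · intro y hy; simp only [mem_range] at hy ⊢; omega
          · intro y hy; simp only [mem_range] at hy; omega
          · intro y hy; simp only [mem_range] at hy; omega
          · intro l' hl'
            simp only [mem_range] at hl'
            have e1 : k - (k - l') = l' := by omega
            rw [e1]
            congr 1
            exact if_congr (by omega) rfl rfl
      _ = ∑ m ∈ range (k + 1), ∑ z ∈ range (k - l + 1),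
          (if c ≤ m ∧ a + m ≤ k ∧ m + z ≤ k then min l m + 1 else 0) := by
          refine Finset.sum_congr rfl (fun m hm => ?_)
          simp only [mem_range] at hm
          by_cases h : c ≤ m ∧ a + m ≤ k
          · rw [if_pos h, mul_one]
            symm
            calc ∑ z ∈ range (k - l + 1),
                  (if c ≤ m ∧ a + m ≤ k ∧ m + z ≤ k then min l m + 1 else 0)
                = ∑ z ∈ range (k - l + 1),
                  (min l m + 1) * (if z ≤ k - m then 1 else 0) := by
                  refine Finset.sum_congr rfl (fun z _ => ?_)
                  by_cases h2 : z ≤ k - m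
                  · rw [if_pos h2, if_pos (by omega), mul_one]
                  · rw [if_neg h2, if_neg (by omega), mul_zero]
              _ = (min l m + 1) * (min (k - l) (k - m) + 1) := by
                  rw [← Finset.mul_sum, sum_ind]
              _ = (min l m + 1) * (min (k - m) (k - l) + 1) := by
                  rw [min_comm (k - l) (k - m)]
          · rw [if_neg h, mul_zero]
            exact (Finset.sum_eq_zero (fun z _ => if_neg (by tauto))).symm
      _ = ∑ z ∈ range (k - l + 1), ∑ m ∈ range (k + 1),
          (if c ≤ m ∧ a + m ≤ k ∧ m + z ≤ k then min l m + 1 else 0) := Finset.sum_comm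
  rw [hA, hB]

lemma sum_ite_range {M : Type*} [AddCommMonoid M] (K m : ℕ) (h : m ≤ K) (f : ℕ → M) :
    ∑ x ∈ range (K + 1), (if x ≤ m then f x else 0) = ∑ x ∈ range (m + 1), f x := by
  have h1 : ∑ x ∈ range (m + 1), f x = ∑ x ∈ range (m + 1), (if x ≤ m then f x else 0) :=
    Finset.sum_congr rfl (fun x hx => by
      rw [if_pos (by simp only [mem_range] at hx; omega)])
  rw [h1]
  exact (Finset.sum_subset (Finset.range_subset_range.2 (by omega))
    (fun x _ hx => by rw [if_neg]; simp only [mem_range] at hx; omega)).symm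

/-- base case -/
lemma card_base (k l : ℕ) (hl : l ≤ k) :
    Nat.card {t : X // Pred k 1 l (k - l) t} = l + 1 := by
  have e : {t : X // Pred k 1 l (k - l) t} ≃ {x : ℕ // x ∈ range (l + 1)} :=
    { toFun := fun s => ⟨s.1.1 0, by simp only [mem_range]; have := s.2.2.2.1; omega⟩
      invFun := fun x =>
        ⟨((fun i => if i = 0 then x.1 else 0), (fun _ => 0), (fun _ => 0)), by
          have hx : x.1 ≤ l := by have := x.2; simp only [mem_range] at this; omega
          refine ⟨⟨fun i hi => if_neg (by omega), fun i _ => rfl, fun i _ => rfl⟩,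
            ⟨rfl, rfl, fun i => ?_, fun i => ?_, fun i hi => ?_, fun i hi => ?_⟩, ?_, ?_⟩
          · show (if i = 0 then x.1 else 0) + (if i + 1 = 0 then x.1 else 0) + 0 ≤ k
            rw [if_neg (by omega : ¬ i + 1 = 0)]
            by_cases h : i = 0
            · rw [if_pos h]; omega
            · rw [if_neg h]; omega
          · show (if i = 0 then x.1 else 0) + 0 + 0 ≤ k
            by_cases h : i = 0
            · rw [if_pos h]; omega
            · rw [if_neg h]; omega
          · show (if i = 0 then x.1 else 0) + 0 + 0 ≤ k
            rw [if_neg (by omega)]; omega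
          · show 0 + 0 + 0 ≤ k
            omega
          · show (if 0 = 0 then x.1 else 0) ≤ l
            simpa using hx
          · show (0 : ℕ) ≤ k - l
            exact Nat.zero_le _⟩
      left_inv := fun s => by
        obtain ⟨t, ⟨hsa, hsb, hsc⟩, ⟨hb0, hc0, _, _, _, _⟩, _, _⟩ := s
        apply Subtype.ext
        refine Prod.ext (funext fun i => ?_) (Prod.ext (funext fun i => ?_) (funext fun i => ?_))
        · by_cases h : i = 0
          · simp [h]
          · simp only [h, if_false]
            exact (hsa i (by omega)).symm
        · cases i with
          | zero => exact hb0.symm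
          | succ j => exact (hsb (j+1) (by omega)).symm
        · cases i with
          | zero => exact hc0.symm
          | succ j => exact (hsc (j+1) (by omega)).symm
      right_inv := fun x => by apply Subtype.ext; simp }
  rw [Nat.card_congr e, Nat.card_eq_finsetCard, Finset.card_range]

lemma main (k : ℕ) (d : ℕ → ℕ → ℕ)
    (hd1 : ∀ l', l' ≤ k → d 1 l' = l' + 1)
    (hdrec : ∀ n l₀, 1 ≤ n → l₀ ≤ k →
      d (n + 1) l₀ = ∑ l' ∈ Finset.range (k + 1),
        (min l₀ (k - l') + 1) * (min l' (k - l₀) + 1) * d n l') :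
    ∀ N, 1 ≤ N → ∀ l, l ≤ k → Nat.card {t : X // Pred k N l (k - l) t} = d N l := by
  intro N
  induction N with
  | zero => omega
  | succ n ih =>
    intro _ l hl
    rcases Nat.eq_zero_or_pos n with hn | hn
    · subst hn
      rw [card_base k l hl, hd1 l hl]
    · rw [card_peel k l n hn hl, hdrec n l hn hl]
      have step : ∀ a ∈ range (k + 1), ∀ c ∈ range (k + 1),
          (tripleSet k l a c).card * Nat.card {t : X // Qred k n a c t} =
          ∑ l' ∈ range (k + 1), (min l (k - l') + 1) * (min l' (k - l) + 1) *
            ((if a ≤ l' ∧ c + l' ≤ k then 1 else 0) * Nat.card {t : X // Qred k n a c t}) := by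
        intro a _ c _
        by_cases hac : a + c ≤ k
        · rw [triple_card k l a c hl hac, Finset.sum_mul]
          exact Finset.sum_congr rfl (fun l' _ => by ring)
        · rw [q_zero k n a c (by omega)]
          simp
      calc ∑ a ∈ range (k + 1), ∑ c ∈ range (k + 1),
            (tripleSet k l a c).card * Nat.card {t : X // Qred k n a c t}
          = ∑ a ∈ range (k + 1), ∑ c ∈ range (k + 1), ∑ l' ∈ range (k + 1),
              (min l (k - l') + 1) * (min l' (k - l) + 1) *
              ((if a ≤ l' ∧ c + l' ≤ k then 1 else 0) * Nat.card {t : X // Qred k n a c t}) := by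
            exact Finset.sum_congr rfl (fun a ha => Finset.sum_congr rfl (fun c hc => step a ha c hc))
        _ = ∑ a ∈ range (k + 1), ∑ l' ∈ range (k + 1), ∑ c ∈ range (k + 1),
              (min l (k - l') + 1) * (min l' (k - l) + 1) *
              ((if a ≤ l' ∧ c + l' ≤ k then 1 else 0) * Nat.card {t : X // Qred k n a c t}) :=
            Finset.sum_congr rfl (fun a _ => Finset.sum_comm)
        _ = ∑ l' ∈ range (k + 1), ∑ a ∈ range (k + 1), ∑ c ∈ range (k + 1),
              (min l (k - l') + 1) * (min l' (k - l) + 1) *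
              ((if a ≤ l' ∧ c + l' ≤ k then 1 else 0) * Nat.card {t : X // Qred k n a c t}) :=
            Finset.sum_comm
        _ = ∑ l' ∈ range (k + 1), (min l (k - l') + 1) * (min l' (k - l) + 1) * d n l' := by
            refine Finset.sum_congr rfl (fun l' hl' => ?_)
            have hl'k : l' ≤ k := by simp only [mem_range] at hl'; omega
            rw [← ih hn l' hl'k, card_P k n l' (k - l')]
            simp_rw [← Finset.mul_sum]
            congr 1
            calc ∑ a ∈ range (k + 1), ∑ c ∈ range (k + 1),
                  (if a ≤ l' ∧ c + l' ≤ k then 1 else 0) * Nat.card {t : X // Qred k n a c t}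
                = ∑ a ∈ range (k + 1), (if a ≤ l' then
                    (∑ c ∈ range (k + 1), if c ≤ k - l' then
                      Nat.card {t : X // Qred k n a c t} else 0) else 0) := by
                  refine Finset.sum_congr rfl (fun a _ => ?_)
                  by_cases h : a ≤ l'
                  · rw [if_pos h]
                    refine Finset.sum_congr rfl (fun c _ => ?_)
                    by_cases h2 : c ≤ k - l'
                    · rw [if_pos h2, if_pos ⟨h, by omega⟩, one_mul]
                    · rw [if_neg h2, if_neg (by omega), zero_mul]
                  · rw [if_neg h]
                    refine Finset.sum_eq_zero (fun c _ => ?_)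
                    rw [if_neg (by omega), zero_mul]
              _ = ∑ a ∈ range (l' + 1), ∑ c ∈ range (k - l' + 1),
                    Nat.card {t : X // Qred k n a c t} := by
                  rw [sum_ite_range k l' hl'k]
                  exact Finset.sum_congr rfl (fun a _ => sum_ite_range k (k - l') (by omega) _)

end EhfAux

/-- The number of `ehf`-monomial data of length `N` (tuples `(a_i; b_i; c_i)` satisfying the
triangle conditions (i)–(v)) equals the Verlinde number `d^{(N)}_{k,l}`, characterized by
`d^{(1)}_{k,l} = l + 1` and the stated recursion. -/
theorem ehf_monomials_count_eq_verlinde (k l N : ℕ) (hk : 1 ≤ k) (hl : l ≤ k) (hN : 1 ≤ N)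
    (d : ℕ → ℕ → ℕ)
    (hd1 : ∀ l', l' ≤ k → d 1 l' = l' + 1)
    (hdrec : ∀ n l₀, 1 ≤ n → l₀ ≤ k →
      d (n + 1) l₀ = ∑ l' ∈ Finset.range (k + 1),
        (min l₀ (k - l') + 1) * (min l' (k - l₀) + 1) * d n l') :
    Nat.card {t : (ℕ → ℕ) × (ℕ → ℕ) × (ℕ → ℕ) //
      (∀ i, N ≤ i → t.1 i = 0) ∧ (∀ i, N ≤ i → t.2.1 i = 0) ∧ (∀ i, N ≤ i → t.2.2 i = 0) ∧
      t.2.1 0 = 0 ∧ t.2.2 0 = 0 ∧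
      (∀ i, t.1 i + t.1 (i + 1) + t.2.1 (i + 1) ≤ k) ∧
      (∀ i, t.1 i + t.2.1 (i + 1) + t.2.2 (i + 1) ≤ k) ∧
      (∀ i, 1 ≤ i → t.1 i + t.2.1 i + t.2.2 (i + 1) ≤ k) ∧
      (∀ i, 1 ≤ i → t.2.1 i + t.2.2 i + t.2.2 (i + 1) ≤ k) ∧
      t.1 0 ≤ l ∧ t.2.2 1 ≤ k - l} = d N l := by
  have := EhfAux.main k d hd1 hdrec N hN l hl
  rw [← this]
  apply Nat.card_congr
  apply Equiv.subtypeEquivRight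
  intro t
  unfold EhfAux.Pred EhfAux.Sup EhfAux.Ok
  tauto
end

section
/- Let K be an algebraically closed field of characteristic zero, let 𝔞 be a Lie algebra over K, let 𝔫 ⊆ 𝔞 be a nilpotent Lie subalgebra satisfying [𝔞, 𝔫] = 𝔫, and let V be a finite-dimensional representation of 𝔞. Then there is a finite chain of 𝔞-invariant subspaces 0 = V_0 ⊆ V_1 ⊆ ⋯ ⊆ V_r = V such that X·V_j ⊆ V_{j−1} for every X ∈ 𝔫 and every j ≥ 1. In particular, every element of 𝔫 acts nilpotently on V, and any product of r elements of 𝔫 annihilates V. -/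
set_option maxHeartbeats 1600000

attribute [local instance 100] LieRing.ofAssociativeRing

section KeyLemmaAux
open LieModule LinearMap


variable {K : Type*} [Field K] [IsAlgClosed K] [CharZero K]
    {V : Type*} [AddCommGroup V] [Module K V] [FiniteDimensional K V]

/-- Key step: if a nilpotent subalgebra `H ⊆ gl(V)` is spanned by brackets `⁅A, X⁆` (`A`
arbitrary, `X ∈ H`) that lie in `H`, then `V` is a nilpotent `H`-module. -/
theorem key_lemma (H : LieSubalgebra K (Module.End K V)) [LieRing.IsNilpotent H]
    (hH : H.toSubmodule ≤ Submodule.span K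
      {g : Module.End K V | g ∈ H ∧ ∃ A X : Module.End K V, X ∈ H ∧ g = ⁅A, X⁆}) :
    LieModule.IsNilpotent H V := by
  -- Step K1 : every weight vanishes on brackets
  have K1 : ∀ (χ : Weight K H V) (A : Module.End K V) (X : H)
      (h : ⁅A, (X : Module.End K V)⁆ ∈ H), χ ⟨⁅A, (X : Module.End K V)⁆, h⟩ = 0 := by
    intro χ A X hTH
    set T : Module.End K V := ⁅A, (X : Module.End K V)⁆ with hT
    set c : K := χ ⟨T, hTH⟩ with hc
    -- the weight space and its natural complement
    set Ws : Submodule K V := (genWeightSpace V (χ : H → K) : Submodule K V) with hWs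
    set Cs : Submodule K V :=
      ((⨆ ψ, ⨆ _ : ψ ≠ (χ : H → K), genWeightSpace V ψ : LieSubmodule K H V) :
        Submodule K V) with hCs
    have hdis : Disjoint Ws Cs := by
      have := LieModule.iSupIndep_genWeightSpace K H V (χ : H → K)
      rwa [← LieSubmodule.disjoint_toSubmodule] at this
    have hcod : Codisjoint Ws Cs := by
      rw [codisjoint_iff, ← LieSubmodule.sup_toSubmodule ,
        ← LieSubmodule.top_toSubmodule (R := K) (L := H) (M := V),
        LieSubmodule.toSubmodule_inj, ← LieModule.iSup_genWeightSpace_eq_top K H V]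
      refine le_antisymm (sup_le (le_iSup _ _) (iSup₂_le fun ψ _ => le_iSup _ ψ))
        (iSup_le fun ψ => ?_)
      by_cases hψ : ψ = (χ : H → K)
      · subst hψ; exact le_sup_left
      · exact le_trans (le_iSup₂ (f := fun ψ (_ : ψ ≠ (χ : H → K)) => genWeightSpace V ψ) ψ hψ)
          le_sup_right
    have hcompl : IsCompl Ws Cs := ⟨hdis, hcod⟩
    -- the projection onto the weight space
    set e : Module.End K V := Ws.subtype ∘ₗ Ws.projectionOnto Cs hcompl with he
    have heW : ∀ v, e v ∈ Ws := fun v => (Ws.projectionOnto Cs hcompl v).2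
    have he1 : ∀ w ∈ Ws, e w = w := fun w hw => by
      simp [he, Submodule.projectionOnto_apply_of_mem_left hcompl hw]
    have he0 : ∀ w ∈ Cs, e w = 0 := fun w hw => by
      simp [he, Submodule.projectionOnto_apply_of_mem_right hcompl hw]
    -- operators preserving `Ws` satisfy `e * S * e = S * e`
    have hese : ∀ S : Module.End K V, (∀ w ∈ Ws, S w ∈ Ws) → e * S * e = S * e := by
      intro S hS
      ext v
      exact he1 _ (hS _ (heW v))
    have hee : e * e = e := by ext v; exact he1 _ (heW v)
    have hXW : ∀ (Y : H), ∀ w ∈ Ws, (Y : Module.End K V) w ∈ Ws := fun Y w hw =>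
      (genWeightSpace V (χ : H → K)).lie_mem hw
    -- main trace computation : `trace (⁅A', X⁆ * e) = 0` for every `A'`
    have main : ∀ A' : Module.End K V,
        trace K V (⁅A', (X : Module.End K V)⁆ * e) = 0 := by
      have hsup : (⊤ : Submodule K (Module.End K V)) =
          ⨆ α : H → K, (LieAlgebra.rootSpace H α : Submodule K (Module.End K V)) := by
        rw [← LieSubmodule.iSup_toSubmodule,
          LieModule.iSup_genWeightSpace_eq_top K H (Module.End K V),
          LieSubmodule.top_toSubmodule]
      intro A'
      have hA' : A' ∈ ⨆ α : H → K, (LieAlgebra.rootSpace H α : Submodule K (Module.End K V)) :=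
        hsup ▸ Submodule.mem_top
      induction hA' using Submodule.iSup_induction' with
      | mem α A' hA' =>
        by_cases hα : α = (0 : H → K)
        · -- zero root space : both `A'` and `X` preserve `Ws`; commutator trick
          subst hα
          have hAW : ∀ w ∈ Ws, A' w ∈ Ws := by
            intro w hw
            have := LieAlgebra.mapsTo_toEnd_genWeightSpace_add_of_mem_rootSpace
              (R := K) (L := Module.End K V) (H := H) (M := V) 0 (χ : H → K) hA' hw
            rwa [zero_add] at this
          have h1 : A' * (X : Module.End K V) * e = (A' * e) * ((X : Module.End K V) * e) := by
            ext v
            have : e ((X : Module.End K V) (e v)) = (X : Module.End K V) (e v) :=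
              he1 _ (hXW X _ (heW v))
            simp [Module.End.mul_apply, this]
          have h2 : (X : Module.End K V) * A' * e = ((X : Module.End K V) * e) * (A' * e) := by
            ext v
            have : e (A' (e v)) = A' (e v) := he1 _ (hAW _ (heW v))
            simp [Module.End.mul_apply, this]
          rw [Ring.lie_def, sub_mul, map_sub, h1, h2, trace_mul_comm, sub_self]
        · -- nonzero root space : the bracket maps `Ws` into the complement
          have hX0 : (X : Module.End K V) ∈ LieAlgebra.rootSpace H (0 : H → K) := by
            have h0 := LieAlgebra.le_zeroRootSubalgebra K (Module.End K V) H X.2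
            rw [← LieSubmodule.mem_toSubmodule, ← LieAlgebra.coe_zeroRootSubalgebra]
            exact h0
          have hB : ⁅A', (X : Module.End K V)⁆ ∈ LieAlgebra.rootSpace H α := by
            have := LieAlgebra.lie_mem_genWeightSpace_of_mem_genWeightSpace hA' hX0
            rwa [add_zero] at this
          have hBC : ∀ w ∈ Ws, ⁅A', (X : Module.End K V)⁆ w ∈ Cs := by
            intro w hw
            have hmem := LieAlgebra.mapsTo_toEnd_genWeightSpace_add_of_mem_rootSpace
              (R := K) (L := Module.End K V) (H := H) (M := V) α (χ : H → K) hB hw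
            have hne : α + (χ : H → K) ≠ (χ : H → K) := by
              intro hcon
              exact hα (by simpa using congrArg (fun ψ => ψ - (χ : H → K)) hcon)
            have hle : genWeightSpace V (α + (χ : H → K)) ≤
                (⨆ ψ, ⨆ _ : ψ ≠ (χ : H → K), genWeightSpace V ψ : LieSubmodule K H V) :=
              le_iSup₂ (f := fun ψ (_ : ψ ≠ (χ : H → K)) => genWeightSpace V ψ) _ hne
            rw [hCs, LieSubmodule.mem_toSubmodule]
            exact hle hmem
          have hzero : e * (⁅A', (X : Module.End K V)⁆ * e) = 0 := by
            ext v; exact he0 _ (hBC _ (heW v))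
          calc trace K V (⁅A', (X : Module.End K V)⁆ * e)
              = trace K V ((⁅A', (X : Module.End K V)⁆ * e) * e) := by rw [mul_assoc, hee]
            _ = trace K V (e * (⁅A', (X : Module.End K V)⁆ * e)) := trace_mul_comm _ _ _
            _ = 0 := by rw [hzero, map_zero]
      | zero => simp
      | add x y _ _ hx hy => rw [add_lie, add_mul, map_add, hx, hy, add_zero]
    -- Now identify `trace (T * e)` with `c • finrank Ws`.
    have hTW : ∀ w ∈ Ws, T w ∈ Ws := hXW ⟨T, hTH⟩
    set S : Module.End K V := T - c • 1 with hS
    have hSW : ∀ w ∈ Ws, S w ∈ Ws := fun w hw => by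
      simpa [hS] using Submodule.sub_mem _ (hTW w hw) (Ws.smul_mem c hw)
    obtain ⟨n, hn⟩ := LieModule.isNilpotent_toEnd_sub_algebraMap V (χ : H → K) ⟨T, hTH⟩
    set D : Module.End K (genWeightSpace V (χ : H → K)) :=
      toEnd K H (genWeightSpace V (χ : H → K)) ⟨T, hTH⟩
        - algebraMap K _ ((χ : H → K) ⟨T, hTH⟩) with hD
    clear_value T c Ws Cs e S D
    have hWsmem : ∀ w : V, w ∈ Ws ↔ w ∈ (genWeightSpace V (χ : H → K) : LieSubmodule K H V) := fun w => by
      rw [hWs]; exact Iff.rfl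
    have hcoe : ∀ y : genWeightSpace V (χ : H → K), (↑(D y) : V) = S (y : V) := by
      intro y
      simp [hD, hS, hc, Module.algebraMap_end_apply]
    have hbridge : ∀ (k : ℕ) (w : V) (hw : w ∈ genWeightSpace V (χ : H → K)),
        (S ^ k) w = (((D ^ k) ⟨w, hw⟩ : genWeightSpace V (χ : H → K)) : V) := by
      intro k
      induction k with
      | zero => intro w hw; rfl
      | succ k ih =>
        intro w hw
        rw [pow_succ', pow_succ', Module.End.mul_apply, Module.End.mul_apply, hcoe]
        exact congrArg S (ih _ _)
    have hSn : S ^ n * e = 0 := by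
      ext v
      have h1 := hbridge n (e v) ((hWsmem _).mp (heW v))
      rw [hn] at h1
      simpa using h1
    have hnilSe : IsNilpotent (S * e) := by
      have hSe : ∀ k : ℕ, (S * e) ^ (k + 1) = S ^ (k + 1) * e := by
        intro k
        induction k with
        | zero => simp
        | succ k ih =>
          calc (S * e) ^ (k + 2) = (S * e) ^ (k + 1) * (S * e) := by rw [pow_succ]
            _ = S ^ (k + 1) * (e * S * e) := by rw [ih]; noncomm_ring
            _ = S ^ (k + 1) * (S * e) := by rw [hese S hSW]
            _ = S ^ (k + 2) * e := by rw [← mul_assoc, ← pow_succ]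
      exact ⟨n + 1, by rw [hSe n, pow_succ', mul_assoc, hSn, mul_zero]⟩
    have htrace_e : trace K V e = (Module.finrank K Ws : K) :=
      LinearMap.IsProj.trace ⟨heW, he1⟩
    have hTe : T * e = S * e + c • e := by
      rw [hS, sub_mul, smul_mul_assoc, one_mul, sub_add_cancel]
    have hmain := main A
    rw [← hT, hTe, map_add, (isNilpotent_trace_of_isNilpotent hnilSe).eq_zero, zero_add,
      map_smul, htrace_e, smul_eq_mul] at hmain
    have hfr : (Module.finrank K Ws : K) ≠ 0 := by
      have hnb : Ws ≠ ⊥ := by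
        rw [hWs]
        intro hb
        refine absurd ((LieSubmodule.toSubmodule_inj _ _).mp ?_) χ.genWeightSpace_ne_bot
        rw [LieSubmodule.bot_toSubmodule]; exact hb
      have : Nontrivial Ws := Submodule.nontrivial_iff_ne_bot.mpr hnb
      exact Nat.cast_ne_zero.mpr (Module.finrank_pos).ne'
    exact (mul_eq_zero.mp hmain).resolve_right hfr
  -- Step K2 : every weight is the zero function
  have K2 : ∀ (χ : Weight K H V) (Y : H), χ Y = 0 := by
    intro χ Y
    have hsub : Submodule.span K
        {g : Module.End K V | g ∈ H ∧ ∃ A X : Module.End K V, X ∈ H ∧ g = ⁅A, X⁆}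
        ≤ H.toSubmodule := by
      rw [Submodule.span_le]; exact fun g hg => hg.1
    have hmem := hH Y.2
    have key : ∀ g (hg : g ∈ Submodule.span K
        {g : Module.End K V | g ∈ H ∧ ∃ A X : Module.End K V, X ∈ H ∧ g = ⁅A, X⁆})
        (h : g ∈ H), (χ : H →ₗ[K] K) ⟨g, h⟩ = 0 := by
      intro g hg
      induction hg using Submodule.span_induction with
      | mem g hg =>
        obtain ⟨hgH, A, Xe, hXe, hEq⟩ := hg
        intro h
        have h' : ⁅A, ((⟨Xe, hXe⟩ : H) : Module.End K V)⁆ ∈ H := by rwa [← hEq]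
        have := K1 χ A ⟨Xe, hXe⟩ h'
        have h2 : (⟨g, h⟩ : H) = ⟨⁅A, Xe⁆, h'⟩ := Subtype.ext hEq
        rw [h2]
        simpa using this
      | zero =>
        intro h
        have h2 : (⟨0, h⟩ : H) = 0 := Subtype.ext rfl
        rw [h2, map_zero]
      | add x y hx hy ihx ihy =>
        intro h
        have h2 : (⟨x + y, h⟩ : H) = ⟨x, hsub hx⟩ + ⟨y, hsub hy⟩ := Subtype.ext rfl
        rw [h2, map_add, ihx (hsub hx), ihy (hsub hy), add_zero]
      | smul a x hx ihx =>
        intro h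
        have h2 : (⟨a • x, h⟩ : H) = a • ⟨x, hsub hx⟩ := Subtype.ext rfl
        rw [h2, map_smul, ihx (hsub hx), smul_zero]
    have := key (Y : Module.End K V) hmem Y.2
    simpa using this
  -- Step K3 : the zero weight space is everything
  have K3 : genWeightSpace V (0 : H → K) = ⊤ := by
    refine le_antisymm le_top ?_
    rw [← LieModule.iSup_genWeightSpace_eq_top' K H V]
    exact iSup_le fun χ => le_of_eq (by rw [show (χ : H → K) = 0 from funext (K2 χ)])
  -- Step K4 : every element of `H` acts nilpotently
  have K4 : ∀ Y : H, IsNilpotent (toEnd K H V Y) := by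
    intro Y
    refine ((LinearMap.charpoly_nilpotent_tfae (toEnd K H V Y)).out 0 2).mpr fun v => ?_
    have hv : v ∈ genWeightSpace V (0 : H → K) := K3 ▸ LieSubmodule.mem_top v
    rw [mem_genWeightSpace] at hv
    obtain ⟨k, hk⟩ := hv Y
    exact ⟨k, by simpa using hk⟩
  -- Step K5 : Engel's theorem
  exact LieAlgebra.isEngelian_of_isNoetherian V K4

end KeyLemmaAux

open LieModule LinearMap


/-- Let `𝔫` be a nilpotent Lie subalgebra of a Lie algebra `L` over an algebraically closed
field of characteristic zero with `[L, 𝔫] = 𝔫`, and `V` a finite-dimensional `L`-module.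
Then there is a finite chain of `L`-invariant subspaces `0 = W 0 ⊆ ⋯ ⊆ W r = V` with
`𝔫 · W j ⊆ W (j−1)`; in particular every element of `𝔫` acts nilpotently on `V` and any
product of `r` elements of `𝔫` annihilates `V`. -/
theorem nilpotent_action_of_bracket_eq
    {K : Type*} [Field K] [IsAlgClosed K] [CharZero K]
    {L : Type*} [LieRing L] [LieAlgebra K L]
    (N : LieSubalgebra K L) [LieRing.IsNilpotent N]
    (hN : Submodule.span K {z : L | ∃ a : L, ∃ x ∈ N, z = ⁅a, x⁆} = N.toSubmodule)
    {V : Type*} [AddCommGroup V] [Module K V] [LieRingModule L V] [LieModule K L V]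
    [FiniteDimensional K V] :
    ∃ (r : ℕ) (W : ℕ → Submodule K V),
      W 0 = ⊥ ∧ W r = ⊤ ∧
      (∀ j, j < r → W j ≤ W (j + 1)) ∧
      (∀ j, ∀ a : L, ∀ v ∈ W j, ⁅a, v⁆ ∈ W j) ∧
      (∀ j, 1 ≤ j → j ≤ r → ∀ x ∈ N, ∀ v ∈ W j, ⁅x, v⁆ ∈ W (j - 1)) ∧
      (∀ x ∈ N, IsNilpotent (LieModule.toEnd K L V x)) ∧
      (∀ xs : List L, (∀ x ∈ xs, x ∈ N) → xs.length = r →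
        (xs.map (LieModule.toEnd K L V)).prod = 0) := by
    classical
  set ρ : L →ₗ⁅K⁆ Module.End K V := LieModule.toEnd K L V with hρ
  set H : LieSubalgebra K (Module.End K V) := (ρ.comp N.incl).range with hHdef
  haveI : LieRing.IsNilpotent H := (ρ.comp N.incl).isNilpotent_range
  -- `N` is an ideal of `L`
  have hIdeal : ∀ (a : L), ∀ x ∈ N, ⁅a, x⁆ ∈ N := by
    intro a x hx
    have h1 : ⁅a, x⁆ ∈ Submodule.span K {z : L | ∃ a : L, ∃ x ∈ N, z = ⁅a, x⁆} :=
      Submodule.subset_span ⟨a, x, hx, rfl⟩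
    rwa [hN] at h1
  have hmemH : ∀ x ∈ N, ρ x ∈ H := fun x hx => ⟨⟨x, hx⟩, rfl⟩
  have hIdealE : ∀ (a : L) (g : Module.End K V), g ∈ H → ⁅ρ a, g⁆ ∈ H := by
    rintro a g ⟨⟨y, hy⟩, rfl⟩
    have h1 : ⁅ρ a, ρ y⁆ = ρ ⁅a, y⁆ := (ρ.map_lie a y).symm
    exact h1 ▸ hmemH _ (hIdeal a y hy)
  -- span hypothesis for `H`
  have hHspan : H.toSubmodule ≤ Submodule.span K
      {g : Module.End K V | g ∈ H ∧ ∃ A X : Module.End K V, X ∈ H ∧ g = ⁅A, X⁆} := by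
    rintro g ⟨⟨y, hy⟩, rfl⟩
    have hy' : y ∈ Submodule.span K {z : L | ∃ a : L, ∃ x ∈ N, z = ⁅a, x⁆} := by
      rw [hN]; exact hy
    have key : ∀ z ∈ Submodule.span K {z : L | ∃ a : L, ∃ x ∈ N, z = ⁅a, x⁆},
        ρ z ∈ Submodule.span K
          {g : Module.End K V | g ∈ H ∧ ∃ A X : Module.End K V, X ∈ H ∧ g = ⁅A, X⁆} := by
      intro z hz
      induction hz using Submodule.span_induction with
      | mem z hz =>
        obtain ⟨a, x, hxN, rfl⟩ := hz
        exact Submodule.subset_span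
          ⟨hmemH _ (hIdeal a x hxN), ρ a, ρ x, hmemH x hxN, ρ.map_lie a x⟩
      | zero => rw [map_zero]; exact Submodule.zero_mem _
      | add z w _ _ hz hw => rw [map_add]; exact Submodule.add_mem _ hz hw
      | smul c z _ hz => rw [map_smul]; exact Submodule.smul_mem _ c hz
    exact key y hy'
  haveI hVnil : LieModule.IsNilpotent H V := key_lemma H hHspan
  obtain ⟨r, hr⟩ := LieModule.IsNilpotent.nilpotent K H V
  -- `L`-invariance of the lower central series
  have inv : ∀ (k : ℕ) (a : L) (v : V), v ∈ lowerCentralSeries K H V k →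
      ⁅a, v⁆ ∈ lowerCentralSeries K H V k := by
    intro k
    induction k with
    | zero => intro a v _; exact LieSubmodule.mem_top _
    | succ k ih =>
      intro a v hv
      rw [LieModule.lowerCentralSeries_succ] at hv ⊢
      have hv' : v ∈ Submodule.span K
          {m : V | ∃ x ∈ (⊤ : LieIdeal K H), ∃ n ∈ lowerCentralSeries K H V k, ⁅x, n⁆ = m} := by
        rw [← LieSubmodule.lieIdeal_oper_eq_linear_span', LieSubmodule.mem_toSubmodule]
        exact hv
      have key : ∀ m ∈ Submodule.span K
          {m : V | ∃ x ∈ (⊤ : LieIdeal K H), ∃ n ∈ lowerCentralSeries K H V k, ⁅x, n⁆ = m},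
          ⁅a, m⁆ ∈ ⁅(⊤ : LieIdeal K H), lowerCentralSeries K H V k⁆ := by
        intro m hm
        induction hm using Submodule.span_induction with
        | mem m hm =>
          obtain ⟨g, -, n, hn, rfl⟩ := hm
          have hsplit : ⁅a, ⁅g, n⁆⁆ =
              ⁅(⟨⁅ρ a, (g : Module.End K V)⁆, hIdealE a _ g.2⟩ : H), n⁆
                + ⁅g, ⁅a, n⁆⁆ := by
            show ρ a ((g : Module.End K V) n) =
              (⁅ρ a, (g : Module.End K V)⁆) n + (g : Module.End K V) (ρ a n)
            simp [Ring.lie_def]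
          rw [hsplit]
          exact add_mem
            (LieSubmodule.lie_mem_lie (LieSubmodule.mem_top _) hn)
            (LieSubmodule.lie_mem_lie (LieSubmodule.mem_top _) (ih a n hn))
        | zero => rw [lie_zero]; exact zero_mem _
        | add m₁ m₂ _ _ h1 h2 => rw [lie_add]; exact add_mem h1 h2
        | smul c m _ h1 => rw [lie_smul]; exact SMulMemClass.smul_mem c h1
      exact key v hv'
  -- the product lemma
  have listLem : ∀ (xs : List L), (∀ x ∈ xs, x ∈ N) → ∀ (k : ℕ) (v : V),
      v ∈ lowerCentralSeries K H V k →
      ((xs.map (LieModule.toEnd K L V)).prod) v ∈ lowerCentralSeries K H V (xs.length + k) := by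
    intro xs
    induction xs with
    | nil => intro _ k v hv; simpa using hv
    | cons x xs ih =>
      intro hmem k v hv
      have h1 := ih (fun y hy => hmem y (List.mem_cons_of_mem _ hy)) k v hv
      have h2 : ⁅(⟨ρ x, hmemH x (hmem x (List.mem_cons_self (a := x) (l := xs)))⟩ : H),
          ((xs.map (LieModule.toEnd K L V)).prod) v⁆
          ∈ ⁅(⊤ : LieIdeal K H), lowerCentralSeries K H V (xs.length + k)⁆ :=
        LieSubmodule.lie_mem_lie (LieSubmodule.mem_top _) h1
      have hidx : (x :: xs).length + k = (xs.length + k) + 1 := by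
        simp [List.length_cons]; omega
      rw [List.map_cons, List.prod_cons, hidx, LieModule.lowerCentralSeries_succ]
      exact h2
  have hprod : ∀ xs : List L, (∀ x ∈ xs, x ∈ N) → xs.length = r →
      (xs.map (LieModule.toEnd K L V)).prod = 0 := by
    intro xs hxs hlen
    ext v
    have h1 := listLem xs hxs 0 v (LieSubmodule.mem_top _)
    rw [hlen, Nat.add_zero, hr, LieSubmodule.mem_bot] at h1
    simpa using h1
  refine ⟨r, fun j => ((lowerCentralSeries K H V (r - j) : LieSubmodule K H V) : Submodule K V),
    ?_, ?_, ?_, ?_, ?_, ?_, hprod⟩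
  · simp only [Nat.sub_zero, hr, LieSubmodule.bot_toSubmodule]
  · simp only [Nat.sub_self, LieModule.lowerCentralSeries_zero, LieSubmodule.top_toSubmodule]
  · intro j hj
    exact (LieSubmodule.toSubmodule_le_toSubmodule _ _).mpr
      (LieModule.antitone_lowerCentralSeries K H V (Nat.sub_le_sub_left (Nat.le_succ j) r))
  · intro j a v hv
    rw [LieSubmodule.mem_toSubmodule] at hv ⊢
    exact inv _ a v hv
  · intro j hj1 hjr x hx v hv
    rw [LieSubmodule.mem_toSubmodule] at hv ⊢
    have h2 : ⁅(⟨ρ x, hmemH x hx⟩ : H), v⁆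
        ∈ ⁅(⊤ : LieIdeal K H), lowerCentralSeries K H V (r - j)⁆ :=
      LieSubmodule.lie_mem_lie (LieSubmodule.mem_top _) hv
    have hidx : r - (j - 1) = (r - j) + 1 := by omega
    rw [hidx, LieModule.lowerCentralSeries_succ]
    exact h2
  · intro x hx
    refine ⟨r, ?_⟩
    have h1 := hprod (List.replicate r x)
      (fun y hy => by rw [List.eq_of_mem_replicate hy]; exact hx) (List.length_replicate (n := r) (a := x))
    rwa [List.map_replicate, List.prod_replicate] at h1
end

section
/- For integers a, b, let [a; b]_q denote the Gaussian binomial coefficient: the polynomial in q equal to ∏_{i=1}^{b} (1−q^{a−b+i})/(1−q^i) when 0 ≤ b ≤ a, and 0 otherwise. For integers M, N define F_{M,N}(q, z₁, z₂) = Σ_{m,n ≥ 0} q^{n²+m²−mn} [M−m+n; m]_q [N−n+m; n]_q z₁^m z₂^n (a finite sum, valued in Laurent polynomials in q, z₁, z₂). Then: (1) for all M ≥ −1 and N ≥ 1, F_{M,N}(q, z₁, z₂) = q·z₂·F_{M+1,N−2}(q, q^{−1}z₁, q²z₂) + F_{M,N−1}(q, z₁, q·z₂); and (2) for all M ≥ 1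 and N ≥ −1, F_{M,N}(q, z₁, z₂) = q·z₁·F_{M−2,N+1}(q, q²z₁, q^{−1}z₂) + F_{M−1,N}(q, q·z₁, z₂). -/
/-- The Gaussian binomial coefficient `[a; b]_q`: equal to
`∏_{i=1}^{b} (1 − q^{a−b+i})/(1 − q^i)` when `0 ≤ b ≤ a`, and `0` otherwise. -/
noncomputable def gaussBinom {K : Type*} [Field K] (q : K) (a b : ℤ) : K :=
  if 0 ≤ b ∧ b ≤ a then
    ∏ i ∈ Finset.range b.toNat, (1 - q ^ (a - b + (i : ℤ) + 1)) / (1 - q ^ ((i : ℤ) + 1))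
  else 0

/-- The field of rational functions in the three independent variables `q, z₁, z₂`. -/
noncomputable abbrev RFF : Type := FractionRing (MvPolynomial (Fin 3) ℚ)

/-- The variable `q`. -/
noncomputable def qv : RFF := algebraMap (MvPolynomial (Fin 3) ℚ) RFF (MvPolynomial.X 0)

/-- The variable `z₁`. -/
noncomputable def z₁v : RFF := algebraMap (MvPolynomial (Fin 3) ℚ) RFF (MvPolynomial.X 1)

/-- The variable `z₂`. -/
noncomputable def z₂v : RFF := algebraMap (MvPolynomial (Fin 3) ℚ) RFF (MvPolynomial.X 2)

/-- `F_{M,N}(q, u, v) = Σ_{m,n ≥ 0} q^{n²+m²−mn} [M−m+n; m]_q [N−n+m; n]_q u^m v^n`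
(a finite sum, since the summand vanishes for large `m, n`). -/
noncomputable def Fchar (M N : ℤ) (u v : RFF) : RFF :=
  ∑ᶠ m : ℕ, ∑ᶠ n : ℕ,
    qv ^ ((n : ℤ) ^ 2 + (m : ℤ) ^ 2 - (m : ℤ) * (n : ℤ)) *
      gaussBinom qv (M - m + n) (m : ℤ) * gaussBinom qv (N - n + m) (n : ℤ) *
      u ^ m * v ^ n

section GB
variable {K : Type*} [Field K] {q : K}

lemma gb_of_not (a b : ℤ) (h : ¬ (0 ≤ b ∧ b ≤ a)) : gaussBinom q a b = 0 := by
  simp [gaussBinom, h]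

lemma gb_zero (a : ℤ) (h : 0 ≤ a) : gaussBinom q a 0 = 1 := by
  simp [gaussBinom, h]

lemma gb_eq (a b : ℤ) (h0 : 0 ≤ b) (hba : b ≤ a) :
    gaussBinom q a b = (∏ i ∈ Finset.range b.toNat, (1 - q ^ (a - b + (i : ℤ) + 1))) /
      (∏ i ∈ Finset.range b.toNat, (1 - q ^ ((i : ℤ) + 1))) := by
  rw [gaussBinom, if_pos ⟨h0, hba⟩, Finset.prod_div_distrib]

lemma den_ne (hq : ∀ n : ℕ, q ^ ((n : ℤ) + 1) ≠ 1) (k : ℕ) :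
    (∏ i ∈ Finset.range k, (1 - q ^ ((i : ℤ) + 1))) ≠ 0 := by
  apply Finset.prod_ne_zero_iff.mpr
  intro i _ h
  exact hq i (by linear_combination -h)

lemma one_sub_ne (hq : ∀ n : ℕ, q ^ ((n : ℤ) + 1) ≠ 1) (c : ℤ) (hc : 1 ≤ c) :
    (1 : K) - q ^ c ≠ 0 := by
  intro h
  apply hq (c - 1).toNat
  have : ((c - 1).toNat : ℤ) + 1 = c := by omega
  rw [this]
  linear_combination -h

lemma gb_self (hq : ∀ n : ℕ, q ^ ((n : ℤ) + 1) ≠ 1) (a : ℤ) (h : 0 ≤ a) :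
    gaussBinom q a a = 1 := by
  rw [gaussBinom, if_pos ⟨h, le_refl a⟩]
  apply Finset.prod_eq_one
  intro i _
  rw [show a - a + (i : ℤ) + 1 = (i : ℤ) + 1 by ring]
  exact div_self (fun h' => hq i (by linear_combination -h'))

lemma gb_mul_left (a b : ℤ) (hb : 1 ≤ b) (hba : b ≤ a) (hq : ∀ n : ℕ, q ^ ((n : ℤ) + 1) ≠ 1) :
    (1 - q ^ b) * gaussBinom q a b = (1 - q ^ a) * gaussBinom q (a - 1) (b - 1) := by
  obtain ⟨k, rfl⟩ : ∃ k : ℕ, b = (k : ℤ) + 1 := ⟨(b - 1).toNat, by omega⟩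
  rw [gb_eq a _ (by omega) hba, gb_eq (a - 1) _ (by omega) (by omega)]
  have h1 : ((k : ℤ) + 1).toNat = k + 1 := by omega
  have h2 : ((k : ℤ) + 1 - 1).toNat = k := by omega
  rw [h1, h2, Finset.prod_range_succ, Finset.prod_range_succ,
    show a - ((k:ℤ)+1) + (k:ℤ) + 1 = a by ring]
  have e1 : (∏ i ∈ Finset.range k, (1 - q ^ (a - ((k:ℤ)+1) + (i : ℤ) + 1)))
      = ∏ i ∈ Finset.range k, (1 - q ^ (a - 1 - ((k:ℤ)+1-1) + (i : ℤ) + 1)) := by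
    apply Finset.prod_congr rfl
    intro i _
    congr 2
    ring
  rw [e1]
  have hd := den_ne hq k
  have hb1 : (1 : K) - q ^ ((k : ℤ) + 1) ≠ 0 := one_sub_ne hq _ (by omega)
  field_simp

lemma gb_mul_right (a b : ℤ) (hb : 0 ≤ b) (hba : b ≤ a - 1) :
    (1 - q ^ (a - b)) * gaussBinom q a b = (1 - q ^ a) * gaussBinom q (a - 1) b := by
  rcases eq_or_lt_of_le hb with h | h
  · rw [← h, gb_zero a (by omega), gb_zero (a-1) (by omega)]
    rw [show a - 0 = a by ring]
  obtain ⟨k, rfl⟩ : ∃ k : ℕ, b = (k : ℤ) + 1 := ⟨(b - 1).toNat, by omega⟩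
  rw [gb_eq a _ (by omega) (by omega), gb_eq (a - 1) _ (by omega) (by omega)]
  have h1 : ((k : ℤ) + 1).toNat = k + 1 := by omega
  rw [h1, Finset.prod_range_succ (fun i => (1 - q ^ (a - ((k:ℤ)+1) + (i : ℤ) + 1))),
    Finset.prod_range_succ' (fun i => (1 - q ^ (a - 1 - ((k:ℤ)+1) + (i : ℤ) + 1)))]
  have e1 : (∏ i ∈ Finset.range k, (1 - q ^ (a - 1 - ((k:ℤ)+1) + ((i : ℕ) + 1 : ℕ) + 1)))
      = ∏ i ∈ Finset.range k, (1 - q ^ (a - ((k:ℤ)+1) + (i : ℤ) + 1)) := by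
    apply Finset.prod_congr rfl
    intro i _
    congr 2
    push_cast
    ring
  rw [e1, show a - ((k:ℤ)+1) + (k:ℤ) + 1 = a by ring,
    show a - 1 - ((k:ℤ)+1) + (0:ℕ) + 1 = a - ((k:ℤ)+1) by push_cast; ring]
  ring

lemma gb_pascal (hq : ∀ n : ℕ, q ^ ((n : ℤ) + 1) ≠ 1) (hq0 : q ≠ 0) (a b : ℤ)
    (h : 1 ≤ a ∨ 1 ≤ b) :
    gaussBinom q a b = gaussBinom q (a - 1) (b - 1) + q ^ b * gaussBinom q (a - 1) b := by
  rcases lt_trichotomy b 0 with hb | hb | hb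
  · rw [gb_of_not _ _ (by omega), gb_of_not _ _ (by omega), gb_of_not (a-1) b (by omega)]
    ring
  · subst hb
    have ha : 1 ≤ a := by omega
    rw [gb_zero a (by omega), gb_zero (a-1) (by omega), gb_of_not _ _ (by omega)]
    simp
  rcases lt_trichotomy a b with hab | hab | hab
  · rw [gb_of_not _ _ (by omega), gb_of_not _ _ (by omega), gb_of_not (a-1) b (by omega)]
    ring
  · subst hab
    rw [gb_self hq a (by omega), gb_self hq (a-1) (by omega), gb_of_not (a-1) a (by omega)]
    ring
  · have hA := gb_mul_left a b (by omega) (by omega) hq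
    have hB := gb_mul_right (q := q) a b (by omega) (by omega)
    have hqa : (1 : K) - q ^ a ≠ 0 := one_sub_ne hq a (by omega)
    have hsplit : q ^ b * q ^ (a - b) = q ^ a := by
      rw [← zpow_add₀ hq0]; ring_nf
    apply mul_left_cancel₀ hqa
    linear_combination hA + q ^ b * hB + gaussBinom q a b * hsplit

end GB

section QV

lemma qv_ne : qv ≠ 0 := by
  rw [qv]
  intro h
  have := IsFractionRing.injective (MvPolynomial (Fin 3) ℚ) RFF
  rw [show (0 : RFF) = algebraMap (MvPolynomial (Fin 3) ℚ) RFF 0 by simp] at h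
  have h2 := this h
  exact MvPolynomial.X_ne_zero 0 h2

lemma qv_ru : ∀ n : ℕ, qv ^ ((n : ℤ) + 1) ≠ 1 := by
  intro n h
  rw [show ((n : ℤ) + 1) = ((n + 1 : ℕ) : ℤ) by push_cast; ring, zpow_natCast, qv,
    ← map_pow] at h
  rw [show (1 : RFF) = algebraMap (MvPolynomial (Fin 3) ℚ) RFF 1 by simp] at h
  have h2 := IsFractionRing.injective (MvPolynomial (Fin 3) ℚ) RFF h
  have h3 := congrArg (MvPolynomial.eval (fun _ => (0:ℚ))) h2
  simp at h3

end QV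

noncomputable def term (M N : ℤ) (u v : RFF) (m n : ℕ) : RFF :=
  qv ^ ((n : ℤ) ^ 2 + (m : ℤ) ^ 2 - (m : ℤ) * (n : ℤ)) *
    gaussBinom qv (M - m + n) (m : ℤ) * gaussBinom qv (N - n + m) (n : ℤ) *
    u ^ m * v ^ n

lemma Fchar_def' (M N : ℤ) (u v : RFF) : Fchar M N u v = ∑ᶠ m, ∑ᶠ n, term M N u v m n := rfl

lemma term_eq_zero (M N : ℤ) (u v : RFF) (m n : ℕ)
    (h : ¬((m:ℤ) ≤ M - m + n ∧ (n:ℤ) ≤ N - n + m)) : term M N u v m n = 0 := by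
  rw [term]
  rcases not_and_or.mp h with h | h
  · rw [gb_of_not (M - m + n) (m:ℤ) (by omega)]; ring
  · rw [gb_of_not (N - n + m) (n:ℤ) (by omega)]; ring

lemma Fchar_eq (M N : ℤ) (u v : RFF) (K₁ K₂ : ℕ)
    (h1 : 2*M + N < 3*(K₁:ℤ)) (h2 : M + 2*N < 3*(K₂:ℤ)) :
    Fchar M N u v = ∑ m ∈ Finset.range K₁, ∑ n ∈ Finset.range K₂, term M N u v m n := by
  rw [Fchar_def']
  have inner : ∀ m : ℕ, ∑ᶠ n, term M N u v m n = ∑ n ∈ Finset.range K₂, term M N u v m n := by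
    intro m
    apply finsum_eq_sum_of_support_subset
    intro n hn
    simp only [Finset.coe_range, Set.mem_Iio]
    by_contra hc
    push_neg at hc
    exact hn (term_eq_zero M N u v m n (by omega))
  rw [finsum_congr inner]
  apply finsum_eq_sum_of_support_subset
  intro m hm
  simp only [Finset.coe_range, Set.mem_Iio]
  by_contra hc
  push_neg at hc
  apply hm
  apply Finset.sum_eq_zero
  intro n _
  exact term_eq_zero M N u v m n (by omega)

lemma collect (A B x y : RFF) (c d e f : ℤ) (hcd : c + d + e + 1 = f) (m n : ℕ) :
    qv * y * (qv ^ c * A * B * (qv ^ d * x ^ m) * (qv ^ e * y ^ n))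
      = qv ^ f * A * B * x ^ m * y ^ (n + 1) := by
  subst hcd
  rw [zpow_add₀ qv_ne, zpow_add₀ qv_ne, zpow_add₀ qv_ne, zpow_one]
  ring

lemma e1_pow (m : ℕ) : (qv⁻¹ * z₁v) ^ m = qv ^ (-(m:ℤ)) * z₁v ^ m := by
  rw [mul_pow, inv_pow, ← zpow_natCast qv m, ← zpow_neg]

lemma e2_pow (v : RFF) (n : ℕ) : (qv ^ 2 * v) ^ n = qv ^ (2*(n:ℤ)) * v ^ n := by
  rw [mul_pow, ← pow_mul, ← zpow_natCast qv (2*n)]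
  norm_cast

noncomputable def T1 (M N : ℤ) (m n : ℕ) : RFF :=
  qv ^ ((n : ℤ) ^ 2 + (m : ℤ) ^ 2 - (m : ℤ) * (n : ℤ)) *
    gaussBinom qv (M - m + n) (m : ℤ) * gaussBinom qv (N - n + m - 1) ((n : ℤ) - 1) *
    z₁v ^ m * z₂v ^ n

lemma split1 (M N : ℤ) (m n : ℕ) (h : 1 ≤ N - n + m ∨ 1 ≤ (n:ℤ)) :
    term M N z₁v z₂v m n = T1 M N m n + term M (N-1) z₁v (qv * z₂v) m n := by
  unfold term T1
  rw [gb_pascal qv_ru qv_ne (N - n + m) (n:ℤ) h,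
    show N - 1 - (n:ℤ) + (m:ℤ) = N - n + m - 1 from by ring, mul_pow, ← zpow_natCast qv n]
  ring

lemma shift1 (M N : ℤ) (m n : ℕ) :
    T1 M N m (n+1) = qv * z₂v * term (M+1) (N-2) (qv⁻¹ * z₁v) (qv^2 * z₂v) m n := by
  unfold term T1
  rw [e1_pow, e2_pow,
    collect _ _ z₁v z₂v _ _ _ (((n:ℤ)+1)^2 + (m:ℤ)^2 - (m:ℤ)*((n:ℤ)+1)) (by ring) m n,
    show (M:ℤ) + 1 - (m:ℤ) + (n:ℤ) = M - (m:ℤ) + ((n+1:ℕ):ℤ) from by push_cast; ring,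
    show (N:ℤ) - 2 - (n:ℤ) + (m:ℤ) = N - ((n+1:ℕ):ℤ) + (m:ℤ) - 1 from by push_cast; ring,
    show ((n:ℕ):ℤ) = ((n+1:ℕ):ℤ) - 1 from by push_cast; ring]
  push_cast
  ring_nf

lemma collect2 (A B x y : RFF) (c d e f : ℤ) (hcd : c + d + e + 1 = f) (m n : ℕ) :
    qv * x * (qv ^ c * A * B * (qv ^ d * x ^ m) * (qv ^ e * y ^ n))
      = qv ^ f * A * B * x ^ (m + 1) * y ^ n := by
  subst hcd
  rw [zpow_add₀ qv_ne, zpow_add₀ qv_ne, zpow_add₀ qv_ne, zpow_one]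
  ring

lemma e1_pow' (x : RFF) (m : ℕ) : (qv⁻¹ * x) ^ m = qv ^ (-(m:ℤ)) * x ^ m := by
  rw [mul_pow, inv_pow, ← zpow_natCast qv m, ← zpow_neg]

noncomputable def T1' (M N : ℤ) (m n : ℕ) : RFF :=
  qv ^ ((n : ℤ) ^ 2 + (m : ℤ) ^ 2 - (m : ℤ) * (n : ℤ)) *
    gaussBinom qv (M - m + n - 1) ((m : ℤ) - 1) * gaussBinom qv (N - n + m) ((n : ℤ)) *
    z₁v ^ m * z₂v ^ n

lemma T1_zero (M N : ℤ) (m : ℕ) : T1 M N m 0 = 0 := by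
  unfold T1
  rw [gb_of_not (N - (0:ℕ) + m - 1) _ (by omega)]
  ring

lemma T1'_zero (M N : ℤ) (n : ℕ) : T1' M N 0 n = 0 := by
  unfold T1'
  rw [gb_of_not (M - (0:ℕ) + n - 1) _ (by omega)]
  ring

lemma split2 (M N : ℤ) (m n : ℕ) (h : 1 ≤ M - m + n ∨ 1 ≤ (m:ℤ)) :
    term M N z₁v z₂v m n = T1' M N m n + term (M-1) N (qv * z₁v) z₂v m n := by
  unfold term T1'
  rw [gb_pascal qv_ru qv_ne (M - m + n) (m:ℤ) h,
    show M - 1 - (m:ℤ) + (n:ℤ) = M - m + n - 1 from by ring, mul_pow, ← zpow_natCast qv m]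
  ring

lemma shift2 (M N : ℤ) (m n : ℕ) :
    T1' M N (m+1) n = qv * z₁v * term (M-2) (N+1) (qv^2 * z₁v) (qv⁻¹ * z₂v) m n := by
  unfold term T1'
  rw [e1_pow', e2_pow,
    collect2 _ _ z₁v z₂v _ _ _ ((n:ℤ)^2 + ((m:ℤ)+1)^2 - ((m:ℤ)+1)*(n:ℤ)) (by ring) m n,
    show (M:ℤ) - 2 - (m:ℤ) + (n:ℤ) = M - ((m+1:ℕ):ℤ) + (n:ℤ) - 1 from by push_cast; ring,
    show (N:ℤ) + 1 - (n:ℤ) + (m:ℤ) = N - (n:ℤ) + ((m+1:ℕ):ℤ) from by push_cast; ring,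
    show ((m:ℕ):ℤ) = ((m+1:ℕ):ℤ) - 1 from by push_cast; ring]
  push_cast
  ring_nf

/-- The two recursion relations for the characters
`F_{M,N} = ch_{q,z₁,z₂} W^{M,N}` of the coinvariant spaces of the level-1 module of the
3-dimensional Heisenberg current algebra:
(1) for `M ≥ −1`, `N ≥ 1`:
    `F_{M,N}(q,z₁,z₂) = q z₂ F_{M+1,N−2}(q, q⁻¹z₁, q²z₂) + F_{M,N−1}(q, z₁, q z₂)`;
(2) for `M ≥ 1`, `N ≥ −1`:
    `F_{M,N}(q,z₁,z₂) = q z₁ F_{M−2,N+1}(q, q²z₁, q⁻¹z₂) + F_{M−1,N}(q, q z₁, z₂)`. -/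
theorem character_recursions :
    (∀ M N : ℤ, -1 ≤ M → 1 ≤ N →
      Fchar M N z₁v z₂v
        = qv * z₂v * Fchar (M + 1) (N - 2) (qv⁻¹ * z₁v) (qv ^ 2 * z₂v)
          + Fchar M (N - 1) z₁v (qv * z₂v)) ∧
    (∀ M N : ℤ, 1 ≤ M → -1 ≤ N →
      Fchar M N z₁v z₂v
        = qv * z₁v * Fchar (M - 2) (N + 1) (qv ^ 2 * z₁v) (qv⁻¹ * z₂v)
          + Fchar (M - 1) N (qv * z₁v) z₂v) := by
  constructor
  · intro M N hM hN
    set K : ℕ := (2*M + 2*N + 7).toNat with hKdef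
    have hK : (K:ℤ) = 2*M + 2*N + 7 := by omega
    rw [Fchar_eq M N z₁v z₂v (K+1) (K+1) (by omega) (by omega),
      Fchar_eq (M+1) (N-2) _ _ (K+1) K (by omega) (by omega),
      Fchar_eq M (N-1) _ _ (K+1) (K+1) (by omega) (by omega)]
    simp only [Finset.mul_sum]
    rw [← Finset.sum_add_distrib]
    apply Finset.sum_congr rfl
    intro m _
    rw [Finset.sum_congr rfl (fun n _ => split1 M N m n (by
      rcases Nat.eq_zero_or_pos n with h | h
      · left; omega
      · right; omega)), Finset.sum_add_distrib]
    congr 1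
    rw [Finset.sum_range_succ' (fun n => T1 M N m n), T1_zero, add_zero]
    exact Finset.sum_congr rfl (fun n _ => shift1 M N m n)
  · intro M N hM hN
    set K : ℕ := (2*M + 2*N + 7).toNat with hKdef
    have hK : (K:ℤ) = 2*M + 2*N + 7 := by omega
    rw [Fchar_eq M N z₁v z₂v (K+1) (K+1) (by omega) (by omega),
      Fchar_eq (M-2) (N+1) _ _ K (K+1) (by omega) (by omega),
      Fchar_eq (M-1) N _ _ (K+1) (K+1) (by omega) (by omega)]
    have hsplit : ∀ m ∈ Finset.range (K+1),
        (∑ n ∈ Finset.range (K+1), term M N z₁v z₂v m n)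
          = ∑ n ∈ Finset.range (K+1),
              (T1' M N m n + term (M-1) N (qv * z₁v) z₂v m n) := fun m _ =>
      Finset.sum_congr rfl (fun n _ => split2 M N m n (by
        rcases Nat.eq_zero_or_pos m with h | h
        · left; omega
        · right; omega))
    rw [Finset.sum_congr rfl hsplit]
    simp only [Finset.sum_add_distrib]
    congr 1
    rw [Finset.sum_range_succ' (fun m => ∑ n ∈ Finset.range (K+1), T1' M N m n)]
    rw [show (∑ n ∈ Finset.range (K+1), T1' M N 0 n) = 0 from
      Finset.sum_eq_zero (fun n _ => T1'_zero M N n), add_zero]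
    simp only [Finset.mul_sum]
    exact Finset.sum_congr rfl (fun m _ => Finset.sum_congr rfl (fun n _ => shift2 M N m n))
end

section
/- For N ≥ 1, let C^{0,N} be the set of tuples (a_0, a_1, …, a_{N−1}; b_1, …, b_{N−1}) ∈ {0,1}^{2N−1} (with the conventions a_i = b_i = 0 for i ≥ N and b_0 = 0) satisfying: (1) b_{i+1} + a_{i+1} + a_i ≤ 1 and b_{i+1} + b_i + a_i ≤ 1 for all i ≥ 0; (2) for every i with 1 ≤ i ≤ N−1 and b_i = 1, there exists j with i < j ≤ N−1 such that a_j = 1 and b_s = 0 for all s with i+1 ≤ s ≤ j; and (3) a_0 = 0. Then the cardinality of C^{0,N} is 2^{N−1}. -/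
namespace C0NProof

abbrev T2 := (ℕ → ℕ) × (ℕ → ℕ)

/-- The master predicate: `t` encodes a word of letters at positions `1..n`
(`t.1 i = 1` means letter A, `t.2 i = 1` means letter B at position `i`),
while `t.2 0` is a "pending B" flag. -/
def Q (n : ℕ) (t : T2) : Prop :=
  (∀ i, t.1 i ≤ 1) ∧ (∀ i, t.2 i ≤ 1) ∧
  (∀ i, n + 1 ≤ i → t.1 i = 0) ∧ (∀ i, n + 1 ≤ i → t.2 i = 0) ∧
  (∀ i, t.2 (i + 1) + t.1 (i + 1) + t.1 i ≤ 1) ∧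
  (∀ i, t.2 (i + 1) + t.2 i + t.1 i ≤ 1) ∧
  (∀ i, i ≤ n → t.2 i = 1 →
    ∃ j, i < j ∧ j ≤ n ∧ t.1 j = 1 ∧ ∀ s, i + 1 ≤ s → s ≤ j → t.2 s = 0) ∧
  t.1 0 = 0

lemma Q.a0 {n : ℕ} {t : T2} (h : Q n t) : t.1 0 = 0 := h.2.2.2.2.2.2.2

def consA (p : ℕ) (f : ℕ → ℕ) : ℕ → ℕ
  | 0 => 0
  | 1 => p
  | (m+2) => f (m+1)

def consB (q r : ℕ) (g : ℕ → ℕ) : ℕ → ℕ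
  | 0 => r
  | 1 => q
  | (m+2) => g (m+1)

def cons (p q r : ℕ) (t : T2) : T2 := (consA p t.1, consB q r t.2)

def shfA (f : ℕ → ℕ) : ℕ → ℕ
  | 0 => 0
  | (m+1) => f (m+2)

def shfB (t : T2) : ℕ → ℕ
  | 0 => (t.2 0 + t.2 1) * (1 - t.1 1)
  | (m+1) => t.2 (m+2)

def shf (t : T2) : T2 := (shfA t.1, shfB t)

lemma shf_Q {n : ℕ} {t : T2} (h : Q (n+1) t) : Q n (shf t) := by
  obtain ⟨h1, h2, h3, h4, h5, h6, h7, h8⟩ := h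
  have h60 : t.2 1 + t.2 0 + t.1 0 ≤ 1 := h6 0
  have h61 : t.2 2 + t.2 1 + t.1 1 ≤ 1 := h6 1
  have h50 : t.2 1 + t.1 1 + t.1 0 ≤ 1 := h5 0
  have h51 : t.2 2 + t.1 2 + t.1 1 ≤ 1 := h5 1
  have hb01 : t.2 0 + t.2 1 ≤ 1 := by omega
  have hflag : shfB t 0 = (t.2 0 + t.2 1) * (1 - t.1 1) := rfl
  have hfb : shfB t 0 ≤ 1 := by
    rw [hflag]
    calc (t.2 0 + t.2 1) * (1 - t.1 1) ≤ 1 * 1 := Nat.mul_le_mul hb01 (by omega)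
      _ = 1 := by norm_num
  -- if the flag is 1 then t.1 1 = 0 and exactly one of t.2 0, t.2 1 is 1
  have hkey : shfB t 0 = 1 → t.1 1 = 0 ∧ t.2 0 + t.2 1 = 1 := by
    intro hf
    rw [hflag] at hf
    have hx : t.2 0 + t.2 1 = 1 := by
      rcases Nat.eq_zero_or_pos (t.2 0 + t.2 1) with h0 | h0
      · rw [h0, Nat.zero_mul] at hf; omega
      · omega
    have hy : t.1 1 = 0 := by
      rcases Nat.eq_zero_or_pos (1 - t.1 1) with h0 | h0
      · rw [h0, Nat.mul_zero] at hf; omega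
      · omega
    exact ⟨hy, hx⟩
  refine ⟨?_, ?_, ?_, ?_, ?_, ?_, ?_, rfl⟩
  · rintro (_ | m)
    · exact Nat.zero_le 1
    · exact h1 (m + 2)
  · rintro (_ | m)
    · exact hfb
    · exact h2 (m + 2)
  · rintro (_ | m) hi
    · omega
    · exact h3 (m + 2) (by omega)
  · rintro (_ | m) hi
    · omega
    · exact h4 (m + 2) (by omega)
  · rintro (_ | m)
    · show t.2 2 + t.1 2 + 0 ≤ 1
      omega
    · exact h5 (m + 2)
  · rintro (_ | m)
    · show t.2 2 + shfB t 0 + 0 ≤ 1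
      have hb2 : t.2 2 ≤ 1 := h2 2
      have key2 : shfB t 0 = 1 → t.2 2 = 0 := by
        intro hf
        obtain ⟨ha1, hsum⟩ := hkey hf
        rcases Nat.eq_zero_or_pos (t.2 1) with hb1 | hb1
        · have hb0 : t.2 0 = 1 := by omega
          obtain ⟨j, hj1, hj2, hj3, hj4⟩ := h7 0 (Nat.zero_le _) hb0
          have hj5 : j ≠ 1 := fun hj => by rw [hj] at hj3; omega
          exact hj4 2 (by omega) (by omega)
        · omega
      rcases Nat.eq_zero_or_pos (shfB t 0) with hf0 | hf0
      · omega
      · have := key2 (by omega); omega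
    · exact h6 (m + 2)
  · rintro (_ | m) hi hb
    · -- i = 0 : flag = 1
      have hf : shfB t 0 = 1 := hb
      obtain ⟨ha1, hsum⟩ := hkey hf
      rcases Nat.eq_zero_or_pos (t.2 1) with hb1 | hb1
      · -- t.2 0 = 1, use matching at 0
        have hb0 : t.2 0 = 1 := by omega
        obtain ⟨j, hj1, hj2, hj3, hj4⟩ := h7 0 (Nat.zero_le _) hb0
        have hj5 : j ≠ 1 := fun hj => by rw [hj] at hj3; omega
        obtain ⟨m, rfl⟩ : ∃ m, j = m + 2 := ⟨j - 2, by omega⟩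
        refine ⟨m + 1, by omega, by omega, ?_, ?_⟩
        · show t.1 (m + 2) = 1
          exact hj3
        · rintro (_ | s) hs1 hs2
          · omega
          · show t.2 (s + 2) = 0
            exact hj4 (s + 2) (by omega) (by omega)
      · -- t.2 1 = 1, use matching at 1
        have hb1' : t.2 1 = 1 := by omega
        obtain ⟨j, hj1, hj2, hj3, hj4⟩ := h7 1 (by omega) hb1'
        obtain ⟨m, rfl⟩ : ∃ m, j = m + 2 := ⟨j - 2, by omega⟩
        refine ⟨m + 1, by omega, by omega, ?_, ?_⟩
        · show t.1 (m + 2) = 1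
          exact hj3
        · rintro (_ | s) hs1 hs2
          · omega
          · show t.2 (s + 2) = 0
            exact hj4 (s + 2) (by omega) (by omega)
    · -- i = m+1
      have hb' : t.2 (m + 2) = 1 := hb
      obtain ⟨j, hj1, hj2, hj3, hj4⟩ := h7 (m + 2) (by omega) hb'
      obtain ⟨k, rfl⟩ : ∃ k, j = k + 2 := ⟨j - 2, by omega⟩
      refine ⟨k + 1, by omega, by omega, ?_, ?_⟩
      · show t.1 (k + 2) = 1
        exact hj3
      · rintro (_ | s) hs1 hs2
        · omega
        · show t.2 (s + 2) = 0
          exact hj4 (s + 2) (by omega) (by omega)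

lemma cons_Q {n p q r : ℕ} {t : T2} (hQ : Q n t)
    (hpq : p + q ≤ 1) (hqr : q + r ≤ 1)
    (hA : p = 1 → t.1 1 = 0 ∧ t.2 1 = 0)
    (hq1 : q = 1 → t.2 0 = 1)
    (hr1 : r = 1 → p = 1 ∨ t.2 0 = 1) :
    Q (n + 1) (cons p q r t) := by
  obtain ⟨h1, h2, h3, h4, h5, h6, h7, h8⟩ := hQ
  have h50 : t.2 1 + t.1 1 + t.1 0 ≤ 1 := h5 0
  have h60 : t.2 1 + t.2 0 + t.1 0 ≤ 1 := h6 0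
  refine ⟨?_, ?_, ?_, ?_, ?_, ?_, ?_, rfl⟩
  · rintro (_ | _ | m)
    · exact Nat.zero_le 1
    · show p ≤ 1; omega
    · exact h1 (m + 1)
  · rintro (_ | _ | m)
    · show r ≤ 1; omega
    · show q ≤ 1; omega
    · exact h2 (m + 1)
  · rintro (_ | _ | m) hi
    · omega
    · omega
    · exact h3 (m + 1) (by omega)
  · rintro (_ | _ | m) hi
    · omega
    · omega
    · exact h4 (m + 1) (by omega)
  · rintro (_ | _ | m)
    · show q + p + 0 ≤ 1; omega
    · show t.2 1 + t.1 1 + p ≤ 1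
      rcases Nat.eq_zero_or_pos p with hp | hp
      · omega
      · obtain ⟨ha, hb⟩ := hA (by omega); omega
    · exact h5 (m + 1)
  · rintro (_ | _ | m)
    · show q + r + 0 ≤ 1; omega
    · show t.2 1 + q + p ≤ 1
      rcases Nat.eq_zero_or_pos q with hq0 | hq0
      · rcases Nat.eq_zero_or_pos p with hp | hp
        · have := h2 1; omega
        · obtain ⟨ha, hb⟩ := hA (by omega); omega
      · have hb0 : t.2 0 = 1 := hq1 (by omega)
        omega
    · exact h6 (m + 1)
  · rintro (_ | _ | m) hi hb
    · -- i = 0 : r = 1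
      have hr : r = 1 := hb
      rcases hr1 hr with hp | hb0
      · refine ⟨1, by omega, by omega, hp, ?_⟩
        rintro (_ | _ | s) hs1 hs2
        · omega
        · show q = 0; omega
        · omega
      · obtain ⟨j, hj1, hj2, hj3, hj4⟩ := h7 0 (Nat.zero_le _) hb0
        obtain ⟨k, rfl⟩ : ∃ k, j = k + 1 := ⟨j - 1, by omega⟩
        refine ⟨k + 2, by omega, by omega, ?_, ?_⟩
        · show t.1 (k + 1) = 1; exact hj3
        · rintro (_ | _ | s) hs1 hs2
          · omega
          · show q = 0; omega
          · show t.2 (s + 1) = 0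
            exact hj4 (s + 1) (by omega) (by omega)
    · -- i = 1 : q = 1
      have hq : q = 1 := hb
      have hb0 : t.2 0 = 1 := hq1 hq
      obtain ⟨j, hj1, hj2, hj3, hj4⟩ := h7 0 (Nat.zero_le _) hb0
      obtain ⟨k, rfl⟩ : ∃ k, j = k + 1 := ⟨j - 1, by omega⟩
      refine ⟨k + 2, by omega, by omega, ?_, ?_⟩
      · show t.1 (k + 1) = 1; exact hj3
      · rintro (_ | _ | s) hs1 hs2
        · omega
        · omega
        · show t.2 (s + 1) = 0
          exact hj4 (s + 1) (by omega) (by omega)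
    · -- i = m + 2
      have hb' : t.2 (m + 1) = 1 := hb
      obtain ⟨j, hj1, hj2, hj3, hj4⟩ := h7 (m + 1) (by omega) hb'
      obtain ⟨k, rfl⟩ : ∃ k, j = k + 1 := ⟨j - 1, by omega⟩
      refine ⟨k + 2, by omega, by omega, ?_, ?_⟩
      · show t.1 (k + 1) = 1; exact hj3
      · rintro (_ | _ | s) hs1 hs2
        · omega
        · omega
        · show t.2 (s + 1) = 0
          exact hj4 (s + 1) (by omega) (by omega)

lemma cons_inj {p q r : ℕ} {t s : T2} (ht : t.1 0 = 0) (hs : s.1 0 = 0)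
    (h0 : t.2 0 = s.2 0) (h : cons p q r t = cons p q r s) : t = s := by
  have h1 := congrArg Prod.fst h
  have h2 := congrArg Prod.snd h
  have e1 : t.1 = s.1 := by
    funext i
    rcases i with _ | m
    · rw [ht, hs]
    · exact congrFun h1 (m + 2)
  have e2 : t.2 = s.2 := by
    funext i
    rcases i with _ | m
    · exact h0
    · exact congrFun h2 (m + 2)
  exact Prod.ext e1 e2

lemma cons_shf {u : T2} (h0 : u.1 0 = 0) :
    cons (u.1 1) (u.2 1) (u.2 0) (shf u) = u := by
  refine Prod.ext ?_ ?_
  · funext i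
    rcases i with _ | _ | m
    · exact h0.symm
    · rfl
    · rfl
  · funext i
    rcases i with _ | _ | m
    · rfl
    · rfl
    · rfl

lemma finite_of_Q {n : ℕ} {S : T2 → Prop} (hS : ∀ t, S t → Q n t) :
    Finite {t : T2 // S t} := by
  refine Finite.of_injective
    (fun x : {t : T2 // S t} =>
      ((fun i : Fin (n + 1) => (⟨min (x.1.1 i) 1, by omega⟩ : Fin 2)),
       (fun i : Fin (n + 1) => (⟨min (x.1.2 i) 1, by omega⟩ : Fin 2)))) ?_
  intro x y hxy
  obtain ⟨hx1, hx2, hx3, hx4, -⟩ := hS _ x.2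
  obtain ⟨hy1, hy2, hy3, hy4, -⟩ := hS _ y.2
  have e1 := congrArg Prod.fst hxy
  have e2 := congrArg Prod.snd hxy
  apply Subtype.ext
  refine Prod.ext (funext fun i => ?_) (funext fun i => ?_)
  · by_cases hi : i ≤ n
    · have hv := congrArg Fin.val (congrFun e1 ⟨i, by omega⟩)
      simp only at hv
      have := hx1 i; have := hy1 i; omega
    · rw [hx3 i (by omega), hy3 i (by omega)]
  · by_cases hi : i ≤ n
    · have hv := congrArg Fin.val (congrFun e2 ⟨i, by omega⟩)
      simp only at hv
      have := hx2 i; have := hy2 i; omega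
    · rw [hx4 i (by omega), hy4 i (by omega)]

noncomputable def tc (n : ℕ) : ℕ := Nat.card {t : T2 // Q n t ∧ t.2 0 = 0}
noncomputable def uc (n : ℕ) : ℕ :=
  Nat.card {t : T2 // Q n t ∧ t.2 0 = 0 ∧ t.1 1 = 0 ∧ t.2 1 = 0}
noncomputable def vc (n : ℕ) : ℕ := Nat.card {t : T2 // Q n t ∧ t.2 0 = 1}


lemma rec3 (n : ℕ) : uc (n + 1) = tc n := by
  symm
  haveI : Finite {t : T2 // Q n t ∧ t.2 0 = 0} := finite_of_Q (fun t h => h.1)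
  haveI : Finite {t : T2 // Q (n+1) t ∧ t.2 0 = 0 ∧ t.1 1 = 0 ∧ t.2 1 = 0} :=
    finite_of_Q (fun t h => h.1)
  refine Nat.card_congr (Equiv.ofBijective
    (fun a : {t : T2 // Q n t ∧ t.2 0 = 0} =>
      (⟨cons 0 0 0 a.1,
        cons_Q a.2.1 (by omega) (by omega) (by omega) (by omega) (by omega),
        rfl, rfl, rfl⟩ :
        {t : T2 // Q (n+1) t ∧ t.2 0 = 0 ∧ t.1 1 = 0 ∧ t.2 1 = 0})) ⟨?_, ?_⟩)
  · intro a b hab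
    exact Subtype.ext (cons_inj a.2.1.a0 b.2.1.a0 (a.2.2.trans b.2.2.symm)
      (congrArg Subtype.val hab))
  · rintro ⟨u, hQ, hb0, ha1, hb1⟩
    have hc := cons_shf hQ.a0
    rw [ha1, hb1, hb0] at hc
    have hflag : (shf u).2 0 = 0 := by
      show (u.2 0 + u.2 1) * (1 - u.1 1) = 0
      rw [hb0, hb1]
      simp
    refine ⟨⟨shf u, shf_Q hQ, hflag⟩, Subtype.ext hc⟩

lemma rec1 (n : ℕ) : tc (n + 1) = tc n + uc n + vc n := by
  haveI : Finite {t : T2 // Q n t ∧ t.2 0 = 0} := finite_of_Q (fun t h => h.1)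
  haveI : Finite {t : T2 // Q n t ∧ t.2 0 = 0 ∧ t.1 1 = 0 ∧ t.2 1 = 0} :=
    finite_of_Q (fun t h => h.1)
  haveI : Finite {t : T2 // Q n t ∧ t.2 0 = 1} := finite_of_Q (fun t h => h.1)
  have e : ({t : T2 // Q n t ∧ t.2 0 = 0} ⊕
      ({t : T2 // Q n t ∧ t.2 0 = 0 ∧ t.1 1 = 0 ∧ t.2 1 = 0} ⊕
       {t : T2 // Q n t ∧ t.2 0 = 1})) ≃
      {t : T2 // Q (n+1) t ∧ t.2 0 = 0} := by
    refine Equiv.ofBijective (fun x =>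
      match x with
      | Sum.inl a => ⟨cons 0 0 0 a.1,
          cons_Q a.2.1 (by omega) (by omega) (by omega) (by omega) (by omega), rfl⟩
      | Sum.inr (Sum.inl b) => ⟨cons 1 0 0 b.1,
          cons_Q b.2.1 (by omega) (by omega) (fun _ => ⟨b.2.2.2.1, b.2.2.2.2⟩)
            (by omega) (by omega), rfl⟩
      | Sum.inr (Sum.inr c) => ⟨cons 0 1 0 c.1,
          cons_Q c.2.1 (by omega) (by omega) (by omega) (fun _ => c.2.2)
            (by omega), rfl⟩) ⟨?_, ?_⟩
    · rintro (a | b | c) (a' | b' | c') h <;>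
        (try (have hv1 := congrFun (congrArg Prod.fst (congrArg Subtype.val h)) 1;
              have hv2 := congrFun (congrArg Prod.snd (congrArg Subtype.val h)) 1;
              simp only [cons, consA, consB] at hv1 hv2))
      · exact congrArg Sum.inl (Subtype.ext (cons_inj a.2.1.a0 a'.2.1.a0
          (a.2.2.trans a'.2.2.symm) (congrArg Subtype.val h)))
      · omega
      · omega
      · omega
      · exact congrArg (fun z => Sum.inr (Sum.inl z)) (Subtype.ext
          (cons_inj b.2.1.a0 b'.2.1.a0 (b.2.2.1.trans b'.2.2.1.symm)
            (congrArg Subtype.val h)))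
      · omega
      · omega
      · omega
      · exact congrArg (fun z => Sum.inr (Sum.inr z)) (Subtype.ext
          (cons_inj c.2.1.a0 c'.2.1.a0 (c.2.2.trans c'.2.2.symm)
            (congrArg Subtype.val h)))
    · rintro ⟨u, hQ, hb0⟩
      obtain ⟨g1, g2, g3, g4, g5, g6, g7, g8⟩ := hQ
      have hp : u.1 1 ≤ 1 := g1 1
      have hq : u.2 1 ≤ 1 := g2 1
      have h50 : u.2 1 + u.1 1 + u.1 0 ≤ 1 := g5 0
      have h51 : u.2 2 + u.1 2 + u.1 1 ≤ 1 := g5 1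
      have h61 : u.2 2 + u.2 1 + u.1 1 ≤ 1 := g6 1
      have hQ' : Q (n+1) u := ⟨g1, g2, g3, g4, g5, g6, g7, g8⟩
      have hc := cons_shf (u := u) g8
      rw [hb0] at hc
      have hQs : Q n (shf u) := shf_Q hQ'
      have hfe : (shf u).2 0 = (u.2 0 + u.2 1) * (1 - u.1 1) := rfl
      rcases Nat.eq_zero_or_pos (u.1 1) with hp0 | hp1
      · rcases Nat.eq_zero_or_pos (u.2 1) with hq0 | hq1
        · refine ⟨Sum.inl ⟨shf u, hQs, ?_⟩, ?_⟩
          · rw [hfe, hb0, hq0, hp0]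
          · apply Subtype.ext
            show cons 0 0 0 (shf u) = u
            rw [hp0, hq0] at hc
            exact hc
        · have hq1' : u.2 1 = 1 := by omega
          refine ⟨Sum.inr (Sum.inr ⟨shf u, hQs, ?_⟩), ?_⟩
          · rw [hfe, hb0, hq1', hp0]
          · apply Subtype.ext
            show cons 0 1 0 (shf u) = u
            rw [hp0, hq1'] at hc
            exact hc
      · have hp1' : u.1 1 = 1 := by omega
        have hq0 : u.2 1 = 0 := by omega
        refine ⟨Sum.inr (Sum.inl ⟨shf u, hQs, ?_, ?_, ?_⟩), ?_⟩
        · rw [hfe, hb0, hq0, hp1']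
        · show u.1 2 = 0; omega
        · show u.2 2 = 0; omega
        · apply Subtype.ext
          show cons 1 0 0 (shf u) = u
          rw [hp1', hq0] at hc
          exact hc
  have := Nat.card_congr e
  rw [Nat.card_sum, Nat.card_sum] at this
  rw [tc, uc, vc, tc]
  omega

lemma rec2 (n : ℕ) : vc (n + 1) = uc n + vc n := by
  haveI : Finite {t : T2 // Q n t ∧ t.2 0 = 0 ∧ t.1 1 = 0 ∧ t.2 1 = 0} :=
    finite_of_Q (fun t h => h.1)
  haveI : Finite {t : T2 // Q n t ∧ t.2 0 = 1} := finite_of_Q (fun t h => h.1)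
  have e : ({t : T2 // Q n t ∧ t.2 0 = 0 ∧ t.1 1 = 0 ∧ t.2 1 = 0} ⊕
       {t : T2 // Q n t ∧ t.2 0 = 1}) ≃
      {t : T2 // Q (n+1) t ∧ t.2 0 = 1} := by
    refine Equiv.ofBijective (fun x =>
      match x with
      | Sum.inl b => ⟨cons 1 0 1 b.1,
          cons_Q b.2.1 (by omega) (by omega) (fun _ => ⟨b.2.2.2.1, b.2.2.2.2⟩)
            (by omega) (fun _ => Or.inl rfl), rfl⟩
      | Sum.inr c => ⟨cons 0 0 1 c.1,
          cons_Q c.2.1 (by omega) (by omega) (by omega) (by omega)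
            (fun _ => Or.inr c.2.2), rfl⟩) ⟨?_, ?_⟩
    · rintro (b | c) (b' | c') h <;>
        (try (have hv1 := congrFun (congrArg Prod.fst (congrArg Subtype.val h)) 1;
              simp only [cons, consA, consB] at hv1))
      · exact congrArg Sum.inl (Subtype.ext
          (cons_inj b.2.1.a0 b'.2.1.a0 (b.2.2.1.trans b'.2.2.1.symm)
            (congrArg Subtype.val h)))
      · omega
      · omega
      · exact congrArg Sum.inr (Subtype.ext
          (cons_inj c.2.1.a0 c'.2.1.a0 (c.2.2.trans c'.2.2.symm)
            (congrArg Subtype.val h)))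
    · rintro ⟨u, hQ, hb0⟩
      obtain ⟨g1, g2, g3, g4, g5, g6, g7, g8⟩ := hQ
      have hp : u.1 1 ≤ 1 := g1 1
      have h60 : u.2 1 + u.2 0 + u.1 0 ≤ 1 := g6 0
      have h51 : u.2 2 + u.1 2 + u.1 1 ≤ 1 := g5 1
      have h61 : u.2 2 + u.2 1 + u.1 1 ≤ 1 := g6 1
      have hq0 : u.2 1 = 0 := by omega
      have hQ' : Q (n+1) u := ⟨g1, g2, g3, g4, g5, g6, g7, g8⟩
      have hc := cons_shf (u := u) g8
      rw [hb0, hq0] at hc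
      have hQs : Q n (shf u) := shf_Q hQ'
      have hfe : (shf u).2 0 = (u.2 0 + u.2 1) * (1 - u.1 1) := rfl
      rcases Nat.eq_zero_or_pos (u.1 1) with hp0 | hp1
      · refine ⟨Sum.inr ⟨shf u, hQs, ?_⟩, ?_⟩
        · rw [hfe, hb0, hq0, hp0]
        · apply Subtype.ext
          show cons 0 0 1 (shf u) = u
          rw [hp0] at hc
          exact hc
      · have hp1' : u.1 1 = 1 := by omega
        refine ⟨Sum.inl ⟨shf u, hQs, ?_, ?_, ?_⟩, ?_⟩
        · rw [hfe, hb0, hq0, hp1']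
        · show u.1 2 = 0; omega
        · show u.2 2 = 0; omega
        · apply Subtype.ext
          show cons 1 0 1 (shf u) = u
          rw [hp1'] at hc
          exact hc
  have := Nat.card_congr e
  rw [Nat.card_sum] at this
  rw [vc, uc, vc]
  omega

def zt : T2 := (fun _ => 0, fun _ => 0)

lemma Q_zt : Q 0 zt := by
  refine ⟨?_, ?_, ?_, ?_, ?_, ?_, ?_, rfl⟩ <;> intro i <;> simp [zt]

lemma Q0_eq {t : T2} (h : Q 0 t) (h0 : t.2 0 = 0) : t = zt := by
  obtain ⟨h1, h2, h3, h4, h5, h6, h7, h8⟩ := h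
  refine Prod.ext (funext fun i => ?_) (funext fun i => ?_)
  · rcases i with _ | m
    · exact h8
    · exact h3 (m+1) (by omega)
  · rcases i with _ | m
    · exact h0
    · exact h4 (m+1) (by omega)

lemma card_T0 : tc 0 = 1 := by
  rw [tc, Nat.card_eq_one_iff_unique]
  constructor
  · constructor
    rintro ⟨x, hx, hx0⟩ ⟨y, hy, hy0⟩
    exact Subtype.ext ((Q0_eq hx hx0).trans (Q0_eq hy hy0).symm)
  · exact ⟨⟨zt, Q_zt, rfl⟩⟩

lemma card_U0 : uc 0 = 1 := by
  rw [uc, Nat.card_eq_one_iff_unique]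
  constructor
  · constructor
    rintro ⟨x, hx, hx0, -, -⟩ ⟨y, hy, hy0, -, -⟩
    exact Subtype.ext ((Q0_eq hx hx0).trans (Q0_eq hy hy0).symm)
  · exact ⟨⟨zt, Q_zt, rfl, rfl, rfl⟩⟩

lemma card_V0 : vc 0 = 0 := by
  rw [vc]
  haveI : IsEmpty {t : T2 // Q 0 t ∧ t.2 0 = 1} := by
    constructor
    rintro ⟨t, hQ, hb0⟩
    obtain ⟨j, hj1, hj2, -, -⟩ := hQ.2.2.2.2.2.2.1 0 (Nat.le_refl 0) hb0
    omega
  exact Nat.card_of_isEmpty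

lemma main (n : ℕ) : tc n = 2 ^ n ∧ uc n + vc n = 2 ^ n := by
  induction n with
  | zero => rw [card_T0, card_U0, card_V0]; norm_num
  | succ n ih =>
    have h1 := rec1 n
    have h2 := rec2 n
    have h3 := rec3 n
    have hp : 2 ^ (n + 1) = 2 ^ n + 2 ^ n := by ring
    omega

end C0NProof

/-- The set `C^{0,N}` of `{0,1}`-tuples `(a_0,…,a_{N−1}; b_1,…,b_{N−1})` (with `a_i = b_i = 0`
for `i ≥ N` and `b_0 = 0`) satisfying the triangle conditions, the right-neighbor condition,
and `a_0 = 0`, has cardinality `2^{N−1}`. -/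
theorem card_C0N (N : ℕ) (hN : 1 ≤ N) :
    Nat.card {t : (ℕ → ℕ) × (ℕ → ℕ) //
      (∀ i, t.1 i ≤ 1) ∧ (∀ i, t.2 i ≤ 1) ∧
      (∀ i, N ≤ i → t.1 i = 0) ∧ (∀ i, N ≤ i → t.2 i = 0) ∧ t.2 0 = 0 ∧
      (∀ i, t.2 (i + 1) + t.1 (i + 1) + t.1 i ≤ 1) ∧
      (∀ i, t.2 (i + 1) + t.2 i + t.1 i ≤ 1) ∧
      (∀ i, 1 ≤ i → i ≤ N - 1 → t.2 i = 1 →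
        ∃ j, i < j ∧ j ≤ N - 1 ∧ t.1 j = 1 ∧ ∀ s, i + 1 ≤ s → s ≤ j → t.2 s = 0) ∧
      t.1 0 = 0} = 2 ^ (N - 1) := by
  obtain ⟨n, rfl⟩ : ∃ n, N = n + 1 := ⟨N - 1, by omega⟩
  have e := Equiv.subtypeEquivRight (p := fun t : C0NProof.T2 =>
      (∀ i, t.1 i ≤ 1) ∧ (∀ i, t.2 i ≤ 1) ∧
      (∀ i, n + 1 ≤ i → t.1 i = 0) ∧ (∀ i, n + 1 ≤ i → t.2 i = 0) ∧ t.2 0 = 0 ∧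
      (∀ i, t.2 (i + 1) + t.1 (i + 1) + t.1 i ≤ 1) ∧
      (∀ i, t.2 (i + 1) + t.2 i + t.1 i ≤ 1) ∧
      (∀ i, 1 ≤ i → i ≤ n + 1 - 1 → t.2 i = 1 →
        ∃ j, i < j ∧ j ≤ n + 1 - 1 ∧ t.1 j = 1 ∧ ∀ s, i + 1 ≤ s → s ≤ j → t.2 s = 0) ∧
      t.1 0 = 0)
    (q := fun t : C0NProof.T2 => C0NProof.Q n t ∧ t.2 0 = 0) ?_
  · rw [Nat.card_congr e]
    have := (C0NProof.main n).1
    rw [C0NProof.tc] at this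
    rw [this]
    congr 1
  · intro t
    constructor
    · rintro ⟨c1, c2, c3, c4, c5, c6, c7, c8, c9⟩
      refine ⟨⟨c1, c2, c3, c4, c6, c7, ?_, c9⟩, c5⟩
      intro i hi hbi
      rcases Nat.eq_zero_or_pos i with rfl | hpos
      · rw [c5] at hbi; omega
      · obtain ⟨j, d1, d2, d3, d4⟩ := c8 i (by omega) (by omega) hbi
        exact ⟨j, d1, by omega, d3, d4⟩
    · rintro ⟨⟨c1, c2, c3, c4, c6, c7, c8, c9⟩, c5⟩
      refine ⟨c1, c2, c3, c4, c5, c6, c7, ?_, c9⟩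
      intro i h1i hin hbi
      obtain ⟨j, d1, d2, d3, d4⟩ := c8 i (by omega) hbi
      exact ⟨j, d1, by omega, d3, d4⟩
end

section
/- With the convention that the binomial coefficient C(a, b) = 0 unless 0 ≤ b ≤ a, for all integers M ≥ −1 and N ≥ −1 with M + N ≥ 1 one has Σ_{m,n ≥ 0} C(M − m + n, m) · C(N − n + m, n) = 2^{M+N−1} (the sum is finite, since the summand vanishes for large m, n). -/
/-- The binomial coefficient `C(a, b)` for integer arguments, with the convention that it
vanishes unless `0 ≤ b ≤ a`. -/
def intChoose (a b : ℤ) : ℕ :=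
  if 0 ≤ b ∧ b ≤ a then Nat.choose a.toNat b.toNat else 0

namespace BDI

def f (M N : ℤ) (m n : ℕ) : ℕ := intChoose (M - m + n) m * intChoose (N - n + m) n

noncomputable def T (M N : ℤ) : ℕ := ∑ᶠ m : ℕ, ∑ᶠ n : ℕ, f M N m n

def S (M N : ℤ) (K : ℕ) : ℕ := ∑ m ∈ Finset.range K, ∑ n ∈ Finset.range K, f M N m n

lemma f_bound {M N : ℤ} {m n : ℕ} (h : f M N m n ≠ 0) :
    (m : ℤ) ≤ M - m + n ∧ (n : ℤ) ≤ N - n + m := by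
  unfold f intChoose at h
  split_ifs at h with h1 h2 h2 <;> simp_all <;> omega

lemma f_vanish_m {M N : ℤ} {m n : ℕ} (h : 2 * M + N < 3 * m) : f M N m n = 0 := by
  by_contra hne
  obtain ⟨h1, h2⟩ := f_bound hne
  omega

lemma f_vanish_n {M N : ℤ} {m n : ℕ} (h : N + m < 2 * n) : f M N m n = 0 := by
  by_contra hne
  obtain ⟨h1, h2⟩ := f_bound hne
  omega

lemma T_eq_S (M N : ℤ) (K : ℕ) (h1 : 2 * M + N < 3 * (K : ℤ)) (h2 : N < (K : ℤ)) :
    T M N = S M N K := by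
  unfold T S
  rw [finsum_eq_sum_of_support_subset _ (s := Finset.range K)]
  · refine Finset.sum_congr rfl fun m hm => ?_
    rw [finsum_eq_sum_of_support_subset _ (s := Finset.range K)]
    intro n hn
    simp only [Function.mem_support] at hn
    simp only [Finset.coe_range, Set.mem_Iio]
    by_contra hc
    push_neg at hc
    exact hn (f_vanish_n (by simp only [Finset.mem_range] at hm; push_cast; omega))
  · intro m hm
    simp only [Function.mem_support] at hm
    simp only [Finset.coe_range, Set.mem_Iio]
    by_contra hc
    push_neg at hc
    apply hm
    have : ∀ n : ℕ, f M N m n = 0 := fun n => f_vanish_m (by push_cast; omega)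
    simp [this]

lemma intChoose_pascal (a b : ℤ) (hb : 1 ≤ b) :
    intChoose a b = intChoose (a - 1) b + intChoose (a - 1) (b - 1) := by
  by_cases hba : b ≤ a
  · have e1 : intChoose a b = a.toNat.choose b.toNat := by
      unfold intChoose; rw [if_pos ⟨by omega, hba⟩]
    have e3 : intChoose (a - 1) (b - 1) = (a - 1).toNat.choose (b - 1).toNat := by
      unfold intChoose; rw [if_pos ⟨by omega, by omega⟩]
    have e2 : intChoose (a - 1) b = (a - 1).toNat.choose b.toNat := by
      by_cases h : b ≤ a - 1
      · unfold intChoose; rw [if_pos ⟨by omega, h⟩]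
      · unfold intChoose; rw [if_neg (by omega)]
        exact (Nat.choose_eq_zero_of_lt (by omega)).symm
    rw [e1, e2, e3, show a.toNat = (a - 1).toNat + 1 by omega,
      show b.toNat = (b - 1).toNat + 1 by omega, Nat.choose_succ_succ']
    omega
  · have c1 : intChoose a b = 0 := by unfold intChoose; rw [if_neg (by omega)]
    have c2 : intChoose (a - 1) b = 0 := by unfold intChoose; rw [if_neg (by omega)]
    have c3 : intChoose (a - 1) (b - 1) = 0 := by unfold intChoose; rw [if_neg (by omega)]
    omega

lemma f_rec (M N : ℤ) (hM : 1 ≤ M) (m n : ℕ) :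
    f M N m n = f (M - 1) N m n +
      (if m = 0 then 0 else intChoose (M - 1 - m + n) ((m : ℤ) - 1) * intChoose (N - n + m) n) := by
  rcases Nat.eq_zero_or_pos m with hm | hm
  · subst hm
    unfold f
    have e1 : intChoose (M + n) 0 = 1 := by
      unfold intChoose; rw [if_pos ⟨le_refl 0, by push_cast; omega⟩]; simp
    have e2 : intChoose (M - 1 + n) 0 = 1 := by
      unfold intChoose; rw [if_pos ⟨le_refl 0, by push_cast; omega⟩]; simp
    simp [e1, e2]
  · rw [if_neg (by omega)]
    unfold f
    have : intChoose (M - m + n) m = intChoose (M - m + n - 1) m + intChoose (M - m + n - 1) ((m:ℤ) - 1) :=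
      intChoose_pascal _ _ (by exact_mod_cast hm)
    rw [this, add_mul]
    congr 2 <;> ring_nf

lemma S_rec (M N : ℤ) (hM : 1 ≤ M) (K : ℕ) (hK : 2 * M + N < 3 * (K : ℤ)) (hK1 : 1 ≤ K) :
    S M N K = S (M - 1) N K + S (M - 2) (N + 1) K := by
  obtain ⟨k, rfl⟩ : ∃ k, K = k + 1 := ⟨K - 1, by omega⟩
  unfold S
  have step : ∀ m ∈ Finset.range (k + 1), ∑ n ∈ Finset.range (k + 1), f M N m n =
      (∑ n ∈ Finset.range (k + 1), f (M - 1) N m n) +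
      (∑ n ∈ Finset.range (k + 1),
        if m = 0 then 0 else intChoose (M - 1 - m + n) ((m : ℤ) - 1) * intChoose (N - n + m) n) := by
    intro m _
    rw [← Finset.sum_add_distrib]
    exact Finset.sum_congr rfl fun n _ => f_rec M N hM m n
  rw [Finset.sum_congr rfl step, Finset.sum_add_distrib]
  congr 1
  -- second sum: reindex
  rw [Finset.sum_range_succ']
  simp only [reduceIte, Finset.sum_const_zero, add_zero]
  have reidx : ∀ m ∈ Finset.range k, (∑ n ∈ Finset.range (k + 1),
      if m + 1 = 0 then 0 else intChoose (M - 1 - (m + 1 : ℕ) + n) (((m + 1 : ℕ) : ℤ) - 1) * intChoose (N - n + (m + 1 : ℕ)) n)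
      = ∑ n ∈ Finset.range (k + 1), f (M - 2) (N + 1) m n := by
    intro m _
    refine Finset.sum_congr rfl fun n _ => ?_
    rw [if_neg (by omega)]
    unfold f
    push_cast
    congr 2 <;> ring_nf
  rw [Finset.sum_congr rfl reidx]
  rw [Finset.sum_range_succ (fun m => ∑ n ∈ Finset.range (k+1), f (M-2) (N+1) m n) k]
  have : ∑ n ∈ Finset.range (k + 1), f (M - 2) (N + 1) k n = 0 := by
    refine Finset.sum_eq_zero fun n _ => f_vanish_m ?_
    push_cast; omega
  omega

lemma S_comm (M N : ℤ) (K : ℕ) : S M N K = S N M K := by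
  unfold S
  rw [Finset.sum_comm]
  refine Finset.sum_congr rfl fun n _ => Finset.sum_congr rfl fun m _ => ?_
  unfold f
  ring

lemma T_comm (M N : ℤ) : T M N = T N M := by
  set K : ℕ := (2 * M + N).toNat + (2 * N + M).toNat + M.toNat + N.toNat + 1 with hKdef
  have h1 : 2 * M + N < 3 * (K : ℤ) := by simp [hKdef]; push_cast; omega
  have h2 : N < (K : ℤ) := by simp [hKdef]; push_cast; omega
  have h3 : 2 * N + M < 3 * (K : ℤ) := by simp [hKdef]; push_cast; omega
  have h4 : M < (K : ℤ) := by simp [hKdef]; push_cast; omega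
  rw [T_eq_S M N K h1 h2, T_eq_S N M K h3 h4, S_comm]

lemma T_rec (M N : ℤ) (hM : 1 ≤ M) (hN : -1 ≤ N) : T M N = T (M - 1) N + T (M - 2) (N + 1) := by
  set K : ℕ := (2 * M + N).toNat + N.toNat + 5 with hKdef
  have hc : ((K : ℤ)) = ((2 * M + N).toNat : ℤ) + (N.toNat : ℤ) + 5 := by push_cast [hKdef]; ring
  have h1 : 2 * M + N < 3 * (K : ℤ) := by omega
  have h2 : N < (K : ℤ) := by omega
  rw [T_eq_S M N K h1 h2, T_eq_S (M - 1) N K (by omega) h2,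
    T_eq_S (M - 2) (N + 1) K (by omega) (by omega)]
  exact S_rec M N hM K h1 (by omega)

lemma T_base : ∀ M N : ℤ, -1 ≤ M → -1 ≤ N → M + N = 1 → T M N = 1 := by
  have c10 : T 1 0 = 1 := by
    rw [T_eq_S 1 0 3 (by norm_num) (by norm_num)]
    decide
  have c2m1 : T 2 (-1) = 1 := by
    rw [T_eq_S 2 (-1) 3 (by norm_num) (by norm_num)]
    decide
  intro M N hM hN hsum
  have hMu : M ≤ 2 := by omega
  interval_cases M
  · rw [show N = 2 by omega, T_comm]; exact c2m1
  · rw [show N = 1 by omega, T_comm]; exact c10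
  · rw [show N = 0 by omega]; exact c10
  · rw [show N = -1 by omega]; exact c2m1

lemma T_main : ∀ k : ℕ, ∀ M N : ℤ, -1 ≤ M → -1 ≤ N → M + N = (k : ℤ) + 1 → T M N = 2 ^ k := by
  intro k
  induction k with
  | zero => intro M N hM hN hsum; simpa using T_base M N hM hN (by exact_mod_cast hsum)
  | succ k ih =>
    intro M N hM hN hsum
    by_cases hM1 : 1 ≤ M
    · rw [T_rec M N hM1 hN,
        ih (M - 1) N (by omega) hN (by push_cast at hsum ⊢; omega),
        ih (M - 2) (N + 1) (by omega) (by omega) (by push_cast at hsum ⊢; omega)]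
      ring
    · have hN2 : 1 ≤ N := by push_cast at hsum; omega
      rw [T_comm, T_rec N M hN2 hM,
        ih (N - 1) M (by omega) hM (by push_cast at hsum ⊢; omega),
        ih (N - 2) (M + 1) (by push_cast at hsum; omega) (by omega) (by push_cast at hsum ⊢; omega)]
      ring

end BDI

/-- For all integers `M, N ≥ −1` with `M + N ≥ 1`:
`Σ_{m,n ≥ 0} C(M − m + n, m) · C(N − n + m, n) = 2^{M+N−1}`
(the sum is finite, since the summand vanishes for large `m, n`). -/
theorem binomial_dimension_identity (M N : ℤ) (hM : -1 ≤ M) (hN : -1 ≤ N) (h : 1 ≤ M + N) :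
    ∑ᶠ m : ℕ, ∑ᶠ n : ℕ, intChoose (M - m + n) m * intChoose (N - n + m) n
      = 2 ^ (M + N - 1).toNat := by
  have : (∑ᶠ m : ℕ, ∑ᶠ n : ℕ, intChoose (M - m + n) m * intChoose (N - n + m) n) = BDI.T M N := rfl
  rw [this]
  exact BDI.T_main (M + N - 1).toNat M N hM hN (by omega)
end
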